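/- arXiv:2002.04703 — 14 statements merged into one kernel-verified Lean document; each statement's English description precedes it below -/
import Mathlib

section
/- Let n ≥ 1 and let O be an n×n complex matrix which is diagonalizable with real eigenvalues, i.e. O = U · D · U⁻¹ for some invertible complex matrix U and some diagonal matrix D with real diagonal entries. Then there exists an n×n Hermitian positive-definite complex matrix η such that η · O = Oᴴ · η. -/
open scoped ComplexOrder Matrix

/-- `star b * b` is the metric pulled back along `b`; for it, `a * D * b` is unitarily similar to
the self-adjoint `D`. -/
theorem IsSelfAdjoint.star_mul_self_mul_conj {M : Type*} [Monoid M] [StarMul M] {a b D : M}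
    (hD : IsSelfAdjoint D) (hba : b * a = 1) :
    star b * b * (a * D * b) = star (a * D * b) * (star b * b) := by
  calc star b * b * (a * D * b) = star b * (b * a) * D * b := by simp only [mul_assoc]
    _ = star b * D * star (b * a) * b := by rw [hba, star_one, mul_one, mul_one]
    _ = star (a * D * b) * (star b * b) := by
      simp only [star_mul, hD.star_eq, mul_assoc]

theorem stmt_0_general (n : ℕ)
    (O U : Matrix (Fin n) (Fin n) ℂ) (d : Fin n → ℝ)
    (hU : IsUnit U)
    (hO : O = U * Matrix.diagonal (fun i => (d i : ℂ)) * U⁻¹) :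
    ∃ η : Matrix (Fin n) (Fin n) ℂ, η.PosDef ∧ η * O = Oᴴ * η := by
  have hD : IsSelfAdjoint (Matrix.diagonal fun i => (d i : ℂ)) :=
    Matrix.isHermitian_diagonal_iff.2 fun i => Complex.conj_ofReal (d i)
  refine ⟨(U⁻¹)ᴴ * U⁻¹, ?_, ?_⟩
  · exact .conjTranspose_mul_self _ <|
      Matrix.mulVec_injective_of_isUnit (Matrix.isUnit_nonsing_inv_iff.2 hU)
  · subst hO
    exact hD.star_mul_self_mul_conj (U.nonsing_inv_mul (U.isUnit_iff_isUnit_det.1 hU))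

/-- If an `n × n` complex matrix `O` (with `n ≥ 1`) is diagonalizable with real
eigenvalues, i.e. `O = U * D * U⁻¹` for an invertible `U` and a diagonal `D` with real diagonal
entries, then there is a Hermitian positive-definite metric `η` with `η * O = Oᴴ * η`. -/
theorem stmt_0 (n : ℕ) (hn : 1 ≤ n)
    (O U : Matrix (Fin n) (Fin n) ℂ) (d : Fin n → ℝ)
    (hU : IsUnit U)
    (hO : O = U * Matrix.diagonal (fun i => (d i : ℂ)) * U⁻¹) :
    ∃ η : Matrix (Fin n) (Fin n) ℂ, η.PosDef ∧ η * O = Oᴴ * η :=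
  stmt_0_general n O U d hU hO
end

section
/- Let η be an n×n Hermitian positive-definite complex matrix and O an n×n complex matrix with η · O = Oᴴ · η. Let Ω be the positive-definite Hermitian square root of η (so Ω is Hermitian positive definite and Ω² = η). Then Ω · O · Ω⁻¹ is Hermitian: (Ω O Ω⁻¹)ᴴ = Ω O Ω⁻¹. -/
open scoped ComplexOrder Matrix

/-- If `η` is Hermitian positive definite, `O` is quasi-Hermitian with respect to
`η` (i.e. `η * O = Oᴴ * η`), and `Ω` is the Hermitian positive-definite square root of `η`
(`Ω.PosDef` and `Ω * Ω = η`), then `Ω * O * Ω⁻¹` is Hermitian. -/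
theorem stmt_1 (n : ℕ) (η O Ω : Matrix (Fin n) (Fin n) ℂ)
    (hη : η.PosDef) (hQH : η * O = Oᴴ * η)
    (hΩ : Ω.PosDef) (hΩ2 : Ω * Ω = η) :
    (Ω * O * Ω⁻¹)ᴴ = Ω * O * Ω⁻¹ := by
  have hu : IsUnit Ω.det := isUnit_iff_ne_zero.mpr (ne_of_gt hΩ.det_pos)
  have hinv : Ω * Ω⁻¹ = 1 := Matrix.mul_nonsing_inv Ω hu
  have hinv' : Ω⁻¹ * Ω = 1 := Matrix.nonsing_inv_mul Ω hu
  have hH : Ωᴴ = Ω := hΩ.1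
  have key : Oᴴ * Ω * Ω = Ω * Ω * O := by
    rw [Matrix.mul_assoc, hΩ2, ← hQH]
  have key2 : Oᴴ * Ω = Ω * (Ω * (O * Ω⁻¹)) := by
    have : Ω * (Ω * (O * Ω⁻¹)) = Ω * Ω * O * Ω⁻¹ := by
      simp only [Matrix.mul_assoc]
    rw [this, ← key, Matrix.mul_assoc, hinv, Matrix.mul_one]
  rw [Matrix.conjTranspose_mul, Matrix.conjTranspose_mul,
    Matrix.conjTranspose_nonsing_inv, hH]
  simp only [Matrix.mul_assoc]
  rw [key2, ← Matrix.mul_assoc Ω⁻¹ Ω, hinv', Matrix.one_mul]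
end

section
/- Let η be an n×n Hermitian positive-definite complex matrix and O an n×n complex matrix with η · O = Oᴴ · η. Then O is diagonalizable with real eigenvalues: there exist an invertible complex matrix U and a diagonal matrix D with real diagonal entries such that O = U · D · U⁻¹. -/
/-! Factor `η = Sᴴ * S` with `S` invertible. Then `η * O = Oᴴ * η` says exactly that
`S * O * S⁻¹` is Hermitian, so the spectral theorem diagonalizes it by a unitary with real
eigenvalues, and conjugating back by `S⁻¹` diagonalizes `O`. -/

open scoped ComplexOrder Matrix

namespace Matrix

variable {n : Type*} [Fintype n] [DecidableEq n] {𝕜 : Type*} [RCLike 𝕜]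

open scoped MatrixOrder in
theorem PosDef.exists_isUnit_eq_conjTranspose_mul_self {η : Matrix n n 𝕜} (hη : η.PosDef) :
    ∃ S, IsUnit S ∧ η = Sᴴ * S :=
  CStarAlgebra.isStrictlyPositive_iff_eq_star_mul_self.mp hη.isStrictlyPositive

theorem isHermitian_mul_mul_inv_of_conjTranspose_mul_self_mul_comm {R : Type*} [CommRing R]
    [StarRing R] {S O : Matrix n n R} (hS : IsUnit S) (h : Sᴴ * S * O = Oᴴ * (Sᴴ * S)) :
    (S * O * S⁻¹).IsHermitian := by
  have hS' : IsUnit S.det := (isUnit_iff_isUnit_det S).mp hS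
  have hSH : IsUnit Sᴴ.det := by rw [det_conjTranspose]; exact hS'.star
  have hO : Oᴴ * Sᴴ = Sᴴ * (S * O * S⁻¹) := by
    rw [← mul_nonsing_inv_cancel_right S (Oᴴ * Sᴴ) hS', Matrix.mul_assoc _ Sᴴ, ← h]
    simp only [Matrix.mul_assoc]
  rw [IsHermitian, conjTranspose_mul, conjTranspose_mul, conjTranspose_nonsing_inv, hO,
    nonsing_inv_mul_cancel_left _ _ hSH]

def IsRealDiagonalizable (A : Matrix n n 𝕜) : Prop :=
  ∃ (U : Matrix n n 𝕜) (d : n → ℝ),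
    IsUnit U ∧ A = U * diagonal (fun i => (d i : 𝕜)) * U⁻¹

theorem IsHermitian.isRealDiagonalizable {A : Matrix n n 𝕜} (hA : A.IsHermitian) :
    A.IsRealDiagonalizable := by
  set V := hA.eigenvectorUnitary
  have hV : (V : Matrix n n 𝕜)⁻¹ = star (V : Matrix n n 𝕜) :=
    inv_eq_left_inv (mem_unitaryGroup_iff'.mp V.2)
  refine ⟨V, hA.eigenvalues, (Unitary.toUnits V).isUnit, ?_⟩
  rw [hV]
  exact hA.spectral_theorem

theorem IsRealDiagonalizable.of_conj {A P : Matrix n n 𝕜} (hP : IsUnit P)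
    (h : (P * A * P⁻¹).IsRealDiagonalizable) : A.IsRealDiagonalizable := by
  obtain ⟨U, d, hU, hPA⟩ := h
  have hP' : IsUnit P.det := (isUnit_iff_isUnit_det P).mp hP
  refine ⟨P⁻¹ * U, d, (isUnit_nonsing_inv_iff.mpr hP).mul hU, ?_⟩
  calc A = P⁻¹ * (P * A * P⁻¹) * P := by
        simp only [Matrix.mul_assoc, nonsing_inv_mul_cancel_left _ _ hP', nonsing_inv_mul _ hP',
          Matrix.mul_one]
    _ = P⁻¹ * U * diagonal (fun i => (d i : 𝕜)) * (P⁻¹ * U)⁻¹ := by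
        rw [hPA, mul_inv_rev, nonsing_inv_nonsing_inv _ hP']
        simp only [Matrix.mul_assoc]

end Matrix

/-- If `η` is Hermitian positive definite and `O` is quasi-Hermitian with respect
to `η` (i.e. `η * O = Oᴴ * η`), then `O` is diagonalizable with real eigenvalues: there are an
invertible matrix `U` and a diagonal matrix with real diagonal entries `d` such that
`O = U * diagonal d * U⁻¹`. -/
theorem stmt_2 (n : ℕ) (η O : Matrix (Fin n) (Fin n) ℂ)
    (hη : η.PosDef) (hQH : η * O = Oᴴ * η) :
    ∃ (U : Matrix (Fin n) (Fin n) ℂ) (d : Fin n → ℝ),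
      IsUnit U ∧ O = U * Matrix.diagonal (fun i => (d i : ℂ)) * U⁻¹ := by
  obtain ⟨S, hS, rfl⟩ := hη.exists_isUnit_eq_conjTranspose_mul_self
  exact ((Matrix.isHermitian_mul_mul_inv_of_conjTranspose_mul_self_mul_comm hS hQH)
    |>.isRealDiagonalizable).of_conj hS
end

section
/- Let O = U · D · U⁻¹ be an n×n complex matrix, where U is invertible and D is diagonal with real diagonal entries. Then an n×n Hermitian positive-definite matrix η satisfies η · O = Oᴴ · η if and only if η⁻¹ = U · d · Uᴴ for some Hermitian positive-definite matrix d commuting with D (d · D = D · d). In other words, the metrics compatible with O are exactly the inverses of matrices of the form U d Uᴴ with d Hermitian positive definite and commuting with D. -/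
open scoped ComplexOrder Matrix

/-! Conjugating by η⁻¹ turns `η O = Oᴴ η` into `O η⁻¹ = η⁻¹ Oᴴ`. Every positive-definite matrix,
in particular η⁻¹, is congruent to a positive-definite `d` via the invertible `U`, i.e.
`η⁻¹ = U d Uᴴ`, and then both sides are congruences: `U (D d) Uᴴ = U (d Dᴴ) Uᴴ`. Cancelling `U`
and `Uᴴ`, the condition is `D d = d D`, as `D` is real diagonal. -/

namespace Matrix

variable {m α : Type*} [Fintype m] [DecidableEq m] [CommRing α] {A U : Matrix m m α}

theorem mul_eq_mul_iff_mul_nonsing_inv_eq (hA : IsUnit A) (X Y : Matrix m m α) :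
    A * X = Y * A ↔ X * A⁻¹ = A⁻¹ * Y := by
  lift A to (Matrix m m α)ˣ using hA
  rw [← coe_units_inv, Units.mul_inv_eq_iff_eq_mul, mul_assoc, Units.eq_inv_mul_iff_mul_eq]

theorem similar_mul_congruent_eq_iff [StarRing α] (hU : IsUnit U) (D d : Matrix m m α) :
    U * D * U⁻¹ * (U * d * Uᴴ) = U * d * Uᴴ * (U * D * U⁻¹)ᴴ ↔ D * d = d * Dᴴ := by
  have hdet : IsUnit U.det := (isUnit_iff_isUnit_det U).mp hU
  have hUH : IsUnit Uᴴ := (isUnit_conjTranspose U).mpr hU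
  have lhs : U * D * U⁻¹ * (U * d * Uᴴ) = U * (D * d) * Uᴴ := by
    simp only [mul_assoc, nonsing_inv_mul_cancel_left _ _ hdet]
  have rhs : U * d * Uᴴ * (U * D * U⁻¹)ᴴ = U * (d * Dᴴ) * Uᴴ := by
    simp only [conjTranspose_mul, conjTranspose_nonsing_inv, mul_assoc,
      mul_nonsing_inv_cancel_left _ _ ((isUnit_iff_isUnit_det _).mp hUH)]
  rw [lhs, rhs, hUH.mul_left_inj, hU.mul_right_inj]

theorem exists_posDef_eq_mul_mul_conjTranspose [PartialOrder α] [StarRing α] {M : Matrix m m α}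
    (hU : IsUnit U) (hM : M.PosDef) : ∃ d : Matrix m m α, d.PosDef ∧ M = U * d * Uᴴ := by
  have hdet : IsUnit U.det := (isUnit_iff_isUnit_det U).mp hU
  refine ⟨U⁻¹ * M * U⁻¹ᴴ, ?_, ?_⟩
  · exact (IsUnit.posDef_star_right_conjugate_iff (isUnit_nonsing_inv_iff.mpr hU)).mpr hM
  · rw [conjTranspose_nonsing_inv, mul_assoc U, nonsing_inv_mul_cancel_right _ _
      ((isUnit_iff_isUnit_det _).mp ((isUnit_conjTranspose U).mpr hU)),
      mul_nonsing_inv_cancel_left _ _ hdet]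

end Matrix

/-- Let `O = U * D * U⁻¹` with `U` invertible and `D = diagonal dD` a diagonal
matrix with real entries. Then a Hermitian positive-definite matrix `η` satisfies
`η * O = Oᴴ * η` if and only if `η⁻¹ = U * d * Uᴴ` for some Hermitian positive-definite `d`
commuting with `D`. -/
theorem stmt_3 (n : ℕ) (O U : Matrix (Fin n) (Fin n) ℂ) (dD : Fin n → ℝ)
    (hU : IsUnit U)
    (hO : O = U * Matrix.diagonal (fun i => (dD i : ℂ)) * U⁻¹)
    (η : Matrix (Fin n) (Fin n) ℂ) (hη : η.PosDef) :
    η * O = Oᴴ * η ↔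
      ∃ d : Matrix (Fin n) (Fin n) ℂ, d.PosDef ∧
        d * Matrix.diagonal (fun i => (dD i : ℂ))
          = Matrix.diagonal (fun i => (dD i : ℂ)) * d ∧
        η⁻¹ = U * d * Uᴴ := by
  set D := Matrix.diagonal (fun i => (dD i : ℂ))
  have hD : Dᴴ = D := by simp [D, Matrix.diagonal_conjTranspose]
  rw [Matrix.mul_eq_mul_iff_mul_nonsing_inv_eq hη.isUnit, hO]
  constructor
  · intro h
    obtain ⟨d, hd, hη_inv⟩ := Matrix.exists_posDef_eq_mul_mul_conjTranspose hU hη.inv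
    rw [hη_inv, Matrix.similar_mul_congruent_eq_iff hU, hD] at h
    exact ⟨d, hd, h.symm, hη_inv⟩
  · rintro ⟨d, -, hcomm, hη_inv⟩
    rw [hη_inv, Matrix.similar_mul_congruent_eq_iff hU, hD]
    exact hcomm.symm
end

section
/- Let I be a finite index set and let η = Σ_{i∈I} A_i ⊗ B_i, where each A_i is an m_A×m_A complex matrix, each B_i is an m_B×m_B complex matrix, ⊗ is the Kronecker product, and the family {A_i : i ∈ I} is linearly independent in the space of m_A×m_A complex matrices. Then for any m_B×m_B complex matrix O_B: η · (1 ⊗ O_B) = (1 ⊗ O_B)ᴴ · η if and only if B_i · O_B = O_Bᴴ · B_i for every i ∈ I. -/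
open scoped ComplexOrder Matrix Kronecker

lemma kron_conjT {m n : Type*} (M : Matrix m m ℂ) (N : Matrix n n ℂ) :
    (M ⊗ₖ N)ᴴ = Mᴴ ⊗ₖ Nᴴ := by
  ext ⟨a, b⟩ ⟨c, d⟩
  simp [Matrix.conjTranspose_apply, Matrix.kroneckerMap_apply]

lemma kron_sum_eq_zero {mA mB : ℕ} {ι : Type} [Fintype ι]
    {A : ι → Matrix (Fin mA) (Fin mA) ℂ} {D : ι → Matrix (Fin mB) (Fin mB) ℂ}
    (hA : LinearIndependent ℂ A) (h : ∑ i, A i ⊗ₖ D i = 0) : ∀ i, D i = 0 := by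
  intro i
  ext b b'
  have key : ∀ a a' : Fin mA, ∑ j, A j a a' * D j b b' = 0 := by
    intro a a'
    have := congrFun (congrFun h (a, b)) (a', b')
    simpa [Matrix.sum_apply, Matrix.kroneckerMap_apply] using this
  have := Fintype.linearIndependent_iff.mp hA (fun j => D j b b') ?_ i
  · simpa using this
  · ext a a'
    simp only [Matrix.sum_apply, Matrix.smul_apply, smul_eq_mul, Matrix.zero_apply]
    simpa [mul_comm] using key a a'

/-- Let `η = ∑ i, A i ⊗ₖ B i` with the family `A` linearly independent. Then for
any matrix `OB`, the operator `1 ⊗ₖ OB` local to subsystem `B` is quasi-Hermitian with respect to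
`η` if and only if `B i * OB = OBᴴ * B i` for every `i`. -/
theorem stmt_4 (mA mB : ℕ) (ι : Type) [Fintype ι]
    (A : ι → Matrix (Fin mA) (Fin mA) ℂ) (B : ι → Matrix (Fin mB) (Fin mB) ℂ)
    (hA : LinearIndependent ℂ A)
    (OB : Matrix (Fin mB) (Fin mB) ℂ) :
    (∑ i, A i ⊗ₖ B i) * ((1 : Matrix (Fin mA) (Fin mA) ℂ) ⊗ₖ OB)
        = ((1 : Matrix (Fin mA) (Fin mA) ℂ) ⊗ₖ OB)ᴴ * (∑ i, A i ⊗ₖ B i)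
      ↔ ∀ i, B i * OB = OBᴴ * B i := by
  have hL : (∑ i, A i ⊗ₖ B i) * ((1 : Matrix (Fin mA) (Fin mA) ℂ) ⊗ₖ OB)
      = ∑ i, A i ⊗ₖ (B i * OB) := by
    rw [Finset.sum_mul]
    refine Finset.sum_congr rfl fun i _ => ?_
    rw [← Matrix.mul_kronecker_mul, Matrix.mul_one]
  have hR : ((1 : Matrix (Fin mA) (Fin mA) ℂ) ⊗ₖ OB)ᴴ * (∑ i, A i ⊗ₖ B i)
      = ∑ i, A i ⊗ₖ (OBᴴ * B i) := by
    rw [kron_conjT, Matrix.conjTranspose_one, Finset.mul_sum]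
    refine Finset.sum_congr rfl fun i _ => ?_
    rw [← Matrix.mul_kronecker_mul, Matrix.one_mul]
  rw [hL, hR]
  constructor
  · intro h i
    have hz : ∑ i, A i ⊗ₖ (B i * OB - OBᴴ * B i) = 0 := by
      have key : ∀ i, A i ⊗ₖ (B i * OB - OBᴴ * B i)
          = A i ⊗ₖ (B i * OB) - A i ⊗ₖ (OBᴴ * B i) := by
        intro i
        ext ⟨a, b⟩ ⟨c, d⟩
        simp [Matrix.kroneckerMap_apply, mul_sub]
      simp only [key, Finset.sum_sub_distrib, h, sub_self]
    have := kron_sum_eq_zero hA hz i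
    exact sub_eq_zero.mp this
  · intro h
    exact Finset.sum_congr rfl fun i _ => by rw [h i]
end

section
/- Let {B_i : i ∈ I} be a finite family of m×m complex matrices (m ≥ 2). Suppose there exist an invertible m×m complex matrix S and an integer k with 0 < k < m such that for every i ∈ I the matrix Sᴴ · B_i · S is block-diagonal with respect to the splitting ℂᵐ = ℂᵏ ⊕ ℂ^{m−k}, i.e. (Sᴴ B_i S)_{pq} = 0 whenever p ≤ k < q or q ≤ k < p. Then there exists an m×m complex matrix O_B which is not a scalar multiple of the identity and satisfies B_i · O_B = O_Bᴴ · B_i for every i ∈ I. -/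
open scoped ComplexOrder Matrix

/-- If a finite family of `m × m` matrices `B i` (with `m ≥ 2`) is simultaneously
reducible, i.e. there are an invertible `S` and `0 < k < m` such that every `Sᴴ * B i * S` is
block-diagonal for the splitting `ℂᵐ = ℂᵏ ⊕ ℂ^(m-k)`, then there is a matrix `OB`, not a scalar
multiple of the identity, with `B i * OB = OBᴴ * B i` for every `i`. -/
theorem stmt_5 (m : ℕ) (hm : 2 ≤ m) (ι : Type) [Fintype ι]
    (B : ι → Matrix (Fin m) (Fin m) ℂ)
    (S : Matrix (Fin m) (Fin m) ℂ) (hS : IsUnit S)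
    (k : ℕ) (hk0 : 0 < k) (hkm : k < m)
    (hred : ∀ (i : ι) (p q : Fin m),
      (((p : ℕ) < k ∧ k ≤ (q : ℕ)) ∨ ((q : ℕ) < k ∧ k ≤ (p : ℕ))) →
      (Sᴴ * B i * S) p q = 0) :
    ∃ OB : Matrix (Fin m) (Fin m) ℂ,
      (¬ ∃ c : ℂ, OB = c • (1 : Matrix (Fin m) (Fin m) ℂ)) ∧
      ∀ i, B i * OB = OBᴴ * B i := by
  set d : Fin m → ℂ := fun p => if (p : ℕ) < k then 0 else 1 with hd
  set D : Matrix (Fin m) (Fin m) ℂ := Matrix.diagonal d with hD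
  have hdet : IsUnit S.det := (Matrix.isUnit_iff_isUnit_det S).mp hS
  have hS1 : S * S⁻¹ = 1 := Matrix.mul_nonsing_inv S hdet
  have hS2 : S⁻¹ * S = 1 := Matrix.nonsing_inv_mul S hdet
  have hdetT : IsUnit Sᴴ.det := by
    rw [Matrix.det_conjTranspose]; exact hdet.star
  have hT1 : Sᴴ * (Sᴴ)⁻¹ = 1 := Matrix.mul_nonsing_inv _ hdetT
  have hT2 : (Sᴴ)⁻¹ * Sᴴ = 1 := Matrix.nonsing_inv_mul _ hdetT
  have hDH : Dᴴ = D := by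
    have hstar : star d = d := by
      funext p
      by_cases h : (p : ℕ) < k <;> simp [hd, h]
    rw [hD, Matrix.diagonal_conjTranspose]
    rw [show (star fun p : Fin m => if (p:ℕ) < k then (0:ℂ) else 1) = d from hstar]
  refine ⟨S * D * S⁻¹, ?_, ?_⟩
  · rintro ⟨c, hc⟩
    have hDc : D = c • 1 := by
      have : D = S⁻¹ * (S * D * S⁻¹) * S := by
        rw [Matrix.mul_assoc, Matrix.mul_assoc, hS2, Matrix.mul_one, ← Matrix.mul_assoc, hS2,
          Matrix.one_mul]
      rw [this, hc]
      rw [Matrix.mul_smul, Matrix.mul_one, Matrix.smul_mul, hS2]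
    have h0 : D ⟨0, lt_of_lt_of_le hk0 hkm.le⟩ ⟨0, lt_of_lt_of_le hk0 hkm.le⟩ = c := by
      rw [hDc]; simp
    have hk : D ⟨k, hkm⟩ ⟨k, hkm⟩ = c := by
      rw [hDc]; simp
    rw [hD] at h0 hk
    simp [hd, hk0, lt_irrefl] at h0 hk
    rw [← h0] at hk
    exact one_ne_zero hk
  · intro i
    have comm : (Sᴴ * B i * S) * D = D * (Sᴴ * B i * S) := by
      ext p q
      rw [hD, Matrix.mul_diagonal, Matrix.diagonal_mul]
      rcases lt_or_ge (p : ℕ) k with hp | hp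
      · rcases lt_or_ge (q : ℕ) k with hq | hq
        · simp [hd, hp, hq]
        · rw [hred i p q (Or.inl ⟨hp, hq⟩)]; ring
      · rcases lt_or_ge (q : ℕ) k with hq | hq
        · rw [hred i p q (Or.inr ⟨hq, hp⟩)]; ring
        · simp [hd, not_lt.mpr hp, not_lt.mpr hq]
    have hOBH : (S * D * S⁻¹)ᴴ = (Sᴴ)⁻¹ * D * Sᴴ := by
      rw [Matrix.conjTranspose_mul, Matrix.conjTranspose_mul, hDH,
        Matrix.conjTranspose_nonsing_inv, Matrix.mul_assoc]
    rw [hOBH]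
    have hSH : IsUnit Sᴴ := (Matrix.isUnit_iff_isUnit_det _).mpr hdetT
    simp only [Matrix.mul_assoc] at comm
    have key : Sᴴ * (B i * (S * D * S⁻¹)) * S = Sᴴ * (Sᴴ⁻¹ * D * Sᴴ * B i) * S := by
      simp only [Matrix.mul_assoc]
      rw [hS2, Matrix.mul_one, Matrix.mul_nonsing_inv_cancel_left _ _ hdetT]
      exact comm
    have key2 := (hS.mul_right_cancel key)
    have key3 := hSH.mul_left_cancel key2
    rw [key3]
end

section
/- Let η_A be an m_A×m_A Hermitian positive-definite complex matrix and η_B an m_B×m_B Hermitian positive-definite complex matrix, with m_A ≥ 2 and m_B ≥ 2, and set η = η_A ⊗ η_B (Kronecker product). Then there exist an m_A×m_A matrix O_A and an m_B×m_B matrix O_B, neither of which is a scalar multiple of the identity, such that η · (O_A ⊗ 1) = (O_A ⊗ 1)ᴴ · η and η · (1 ⊗ O_B) = (1 ⊗ O_B)ᴴ · η. -/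
open scoped ComplexOrder Matrix Kronecker

/-
A metric `η` is Hermitian and invertible, so for every Hermitian `H` the matrix `η⁻¹ * H` is
quasi-Hermitian: both `η * (η⁻¹ * H)` and `(η⁻¹ * H)ᴴ * η` equal `H`. Taking `H` a diagonal matrix
unit, `η⁻¹ * H` is not scalar once the dimension is at least two, because `H` vanishes on a
diagonal entry where `η` does not. A product metric `ηA ⊗ₖ ηB` then makes `OA ⊗ₖ 1` and `1 ⊗ₖ OB`
quasi-Hermitian as soon as `OA` and `OB` are quasi-Hermitian for `ηA` and `ηB`.
-/

namespace Matrix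

variable {n : Type*} [Fintype n]

def IsQuasiHermitian {R : Type*} [Semiring R] [StarRing R] (η O : Matrix n n R) : Prop :=
  η * O = Oᴴ * η

section Kronecker

variable {m : Type*} [Fintype m] {R : Type*} [CommSemiring R] [StarRing R]

theorem IsQuasiHermitian.kronecker_one [DecidableEq n] {ηA O : Matrix m m R}
    (h : ηA.IsQuasiHermitian O) (ηB : Matrix n n R) : (ηA ⊗ₖ ηB).IsQuasiHermitian (O ⊗ₖ 1) := by
  rw [IsQuasiHermitian, ← mul_kronecker_mul, conjTranspose_kronecker, ← mul_kronecker_mul, h,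
    conjTranspose_one, mul_one, one_mul]

theorem IsQuasiHermitian.one_kronecker [DecidableEq m] {ηB O : Matrix n n R}
    (h : ηB.IsQuasiHermitian O) (ηA : Matrix m m R) : (ηA ⊗ₖ ηB).IsQuasiHermitian (1 ⊗ₖ O) := by
  rw [IsQuasiHermitian, ← mul_kronecker_mul, conjTranspose_kronecker, ← mul_kronecker_mul, h,
    conjTranspose_one, mul_one, one_mul]

end Kronecker

variable [DecidableEq n]

theorem isQuasiHermitian_inv_mul {K : Type*} [Field K] [StarRing K] {η H : Matrix n n K}
    (hη : η.IsHermitian) (hdet : IsUnit η.det) (hH : H.IsHermitian) :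
    η.IsQuasiHermitian (η⁻¹ * H) := by
  rw [IsQuasiHermitian, conjTranspose_mul, hH.eq, conjTranspose_nonsing_inv, hη.eq,
    ← mul_assoc, mul_nonsing_inv _ hdet, one_mul, mul_assoc, nonsing_inv_mul _ hdet, mul_one]

theorem PosDef.exists_isQuasiHermitian_ne_smul_one [Nontrivial n] {𝕜 : Type*} [RCLike 𝕜]
    {η : Matrix n n 𝕜} (hη : η.PosDef) :
    ∃ O : Matrix n n 𝕜, (¬ ∃ c : 𝕜, O = c • 1) ∧ η.IsQuasiHermitian O := by
  obtain ⟨i, j, hij⟩ := exists_pair_ne n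
  have hdet : IsUnit η.det := (isUnit_iff_isUnit_det η).mp hη.isUnit
  have hH : (single i i (1 : 𝕜)).IsHermitian := by
    rw [IsHermitian, conjTranspose_single, star_one]
  refine ⟨η⁻¹ * single i i 1, ?_, isQuasiHermitian_inv_mul hη.isHermitian hdet hH⟩
  rintro ⟨c, hc⟩
  have hsingle : single i i (1 : 𝕜) = c • η :=
    calc single i i 1 = η * (η⁻¹ * single i i 1) := by
          rw [← mul_assoc, mul_nonsing_inv _ hdet, one_mul]
      _ = c • η := by rw [hc, Matrix.mul_smul, mul_one]
  have hc0 : c = 0 := by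
    have hjj := congrFun (congrFun hsingle j) j
    rw [single_apply_of_row_ne hij i j, smul_apply, smul_eq_mul] at hjj
    exact (mul_eq_zero.mp hjj.symm).resolve_right hη.diag_pos.ne'
  simpa [hc0] using congrFun (congrFun hsingle i) i

end Matrix

/-- If `ηA` and `ηB` are Hermitian positive definite (of sizes `mA, mB ≥ 2`) and
`η = ηA ⊗ₖ ηB`, then there exist `OA` and `OB`, neither a scalar multiple of the identity, such
that `OA ⊗ₖ 1` and `1 ⊗ₖ OB` are both quasi-Hermitian with respect to `η`. -/
theorem stmt_7 (mA mB : ℕ) (hmA : 2 ≤ mA) (hmB : 2 ≤ mB)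
    (ηA : Matrix (Fin mA) (Fin mA) ℂ) (ηB : Matrix (Fin mB) (Fin mB) ℂ)
    (hηA : ηA.PosDef) (hηB : ηB.PosDef) :
    ∃ (OA : Matrix (Fin mA) (Fin mA) ℂ) (OB : Matrix (Fin mB) (Fin mB) ℂ),
      (¬ ∃ c : ℂ, OA = c • (1 : Matrix (Fin mA) (Fin mA) ℂ)) ∧
      (¬ ∃ c : ℂ, OB = c • (1 : Matrix (Fin mB) (Fin mB) ℂ)) ∧
      (ηA ⊗ₖ ηB) * (OA ⊗ₖ (1 : Matrix (Fin mB) (Fin mB) ℂ))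
        = (OA ⊗ₖ (1 : Matrix (Fin mB) (Fin mB) ℂ))ᴴ * (ηA ⊗ₖ ηB) ∧
      (ηA ⊗ₖ ηB) * ((1 : Matrix (Fin mA) (Fin mA) ℂ) ⊗ₖ OB)
        = ((1 : Matrix (Fin mA) (Fin mA) ℂ) ⊗ₖ OB)ᴴ * (ηA ⊗ₖ ηB) := by
  have : Nontrivial (Fin mA) := Fin.nontrivial_iff_two_le.mpr hmA
  have : Nontrivial (Fin mB) := Fin.nontrivial_iff_two_le.mpr hmB
  obtain ⟨OA, hOA_ne, hOA⟩ := hηA.exists_isQuasiHermitian_ne_smul_one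
  obtain ⟨OB, hOB_ne, hOB⟩ := hηB.exists_isQuasiHermitian_ne_smul_one
  exact ⟨OA, OB, hOA_ne, hOB_ne, hOA.kronecker_one ηB, hOB.one_kronecker ηA⟩
end

section
/- Let M be an n×n Hermitian positive-definite complex matrix, let A ⊆ {1,…,n} be nonempty, let K(M,A) = {v ∈ ℂⁿ : v_j = 0 for all j ∉ A, and (M·v)_i = 0 for all i ∉ A}, and let w¹,…,w^K be a basis of K(M,A). Then an n×n complex matrix o supported on A×A satisfies M · o = oᴴ · M if and only if there exist complex numbers α_{μν} (1 ≤ μ,ν ≤ K) with α_{μν} = conj(α_{νμ}) such that o_{ij} = Σ_{μ,ν} α_{μν} · w^μ_i · conj((M·w^ν)_j) for all i, j. -/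
/-!
Write `W` for the matrix whose columns are the basis vectors `w μ`. The support condition on `o`
together with `M o = oᴴ M` puts every column of `o` into `K(M, A)`, so `o = W C`. The Gram
matrix `G = Wᴴ M W` is positive definite, hence invertible, and the relation becomes
`G (C W) = (C W)ᴴ G`; thus `a = G⁻¹ (C W)ᴴ` is Hermitian and `G C = (C W)ᴴ (M W)ᴴ` gives
`C = a (M W)ᴴ`, i.e. `o = W a (M W)ᴴ`. Conversely `W a (M W)ᴴ = W a Wᴴ M` satisfies the relation
for every Hermitian `a` because `M` is Hermitian.
-/

open scoped ComplexOrder Matrix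

/-- The kernel of the off-diagonal block `M^{A'A}`: vectors supported on `A` whose image under
`M` is also supported on `A`. -/
noncomputable def Kspace {n : ℕ} (M : Matrix (Fin n) (Fin n) ℂ) (A : Set (Fin n)) :
    Submodule ℂ (Fin n → ℂ) where
  carrier := {v | (∀ j ∉ A, v j = 0) ∧ ∀ i ∉ A, M.mulVec v i = 0}
  add_mem' := by
    rintro v w ⟨hv1, hv2⟩ ⟨hw1, hw2⟩
    refine ⟨fun j hj => ?_, fun i hi => ?_⟩
    · simp [hv1 j hj, hw1 j hj]
    · simp [Matrix.mulVec_add, hv2 i hi, hw2 i hi]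
  zero_mem' := by
    refine ⟨fun j _ => rfl, fun i _ => ?_⟩
    simp [Matrix.mulVec_zero]
  smul_mem' := by
    rintro c v ⟨hv1, hv2⟩
    refine ⟨fun j hj => ?_, fun i hi => ?_⟩
    · simp [hv1 j hj]
    · simp [Matrix.mulVec_smul, hv2 i hi]

namespace Matrix

variable {l m n R : Type*} [Fintype n]

theorem mul_mul_conjTranspose_apply [Fintype l] [CommSemiring R] [StarRing R]
    (X : Matrix m l R) (a : Matrix l n R) (Y : Matrix m n R) (i j : m) :
    (X * a * Yᴴ) i j = ∑ μ, ∑ ν, a μ ν * X i μ * star (Y j ν) := by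
  simp only [mul_apply, conjTranspose_apply, Finset.sum_mul]
  rw [Finset.sum_comm]
  exact Finset.sum_congr rfl fun _ _ => Finset.sum_congr rfl fun _ _ => by ring

theorem mul_mul_mul_conjTranspose_eq_conjTranspose_mul [Fintype m] [Semiring R] [StarRing R]
    {M : Matrix n n R} (hM : M.IsHermitian) {a : Matrix m m R} (ha : a.IsHermitian)
    (W : Matrix n m R) :
    M * (W * a * (M * W)ᴴ) = (W * a * (M * W)ᴴ)ᴴ * M := by
  simp only [conjTranspose_mul, conjTranspose_conjTranspose, hM.eq, ha.eq, Matrix.mul_assoc]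

theorem exists_isHermitian_eq_mul_conjTranspose [Fintype m] [DecidableEq m] [Field R]
    [StarRing R] {M : Matrix n n R} (hM : M.IsHermitian) {W : Matrix n m R}
    (hG : IsUnit (Wᴴ * M * W)) {C : Matrix m n R} (h : M * (W * C) = (W * C)ᴴ * M) :
    ∃ a : Matrix m m R, a.IsHermitian ∧ C = a * (M * W)ᴴ := by
  set G := Wᴴ * M * W
  have hGdet : IsUnit G.det := (isUnit_iff_isUnit_det G).mp hG
  have hWM : Wᴴ * M = (M * W)ᴴ := by rw [conjTranspose_mul, hM.eq]
  have hGC : G * C = (C * W)ᴴ * (M * W)ᴴ := by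
    rw [conjTranspose_mul, ← hWM, Matrix.mul_assoc Wᴴ, Matrix.mul_assoc, ← Matrix.mul_assoc Cᴴ,
      ← conjTranspose_mul, ← h]
    simp only [Matrix.mul_assoc]
  have hGCW : G * (C * W) = (C * W)ᴴ * G := by
    rw [← Matrix.mul_assoc, hGC, Matrix.mul_assoc, ← hWM]
  refine ⟨G⁻¹ * (C * W)ᴴ, ?_, ?_⟩
  · have hCW : C * W * G⁻¹ = G⁻¹ * (C * W)ᴴ := by
      calc C * W * G⁻¹ = G⁻¹ * (G * (C * W)) * G⁻¹ := by
            rw [← Matrix.mul_assoc, nonsing_inv_mul G hGdet, Matrix.one_mul]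
        _ = G⁻¹ * (C * W)ᴴ := by
            rw [hGCW, Matrix.mul_assoc, Matrix.mul_assoc, mul_nonsing_inv G hGdet, Matrix.mul_one]
    rw [IsHermitian, conjTranspose_mul, conjTranspose_conjTranspose, conjTranspose_nonsing_inv,
      (isHermitian_conjTranspose_mul_mul W hM).eq, hCW]
  · rw [Matrix.mul_assoc, ← hGC, ← Matrix.mul_assoc, nonsing_inv_mul G hGdet, Matrix.one_mul]

end Matrix

namespace Module.Basis

variable {ι n R : Type*} [Fintype ι] [CommRing R] {S : Submodule R (n → R)}

noncomputable def colMatrix (b : Basis ι R S) : Matrix n ι R :=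
  Matrix.of fun i μ => (b μ : n → R) i

theorem mulVec_colMatrix_injective (b : Basis ι R S) : Function.Injective b.colMatrix.mulVec :=
  Matrix.mulVec_injective_iff.mpr (b.linearIndependent.map' S.subtype S.ker_subtype)

theorem exists_eq_colMatrix_mul {m : Type*} (b : Basis ι R S) {o : Matrix n m R}
    (ho : ∀ j, o.col j ∈ S) : ∃ C : Matrix ι m R, o = b.colMatrix * C := by
  refine ⟨Matrix.of fun μ j => b.repr ⟨o.col j, ho j⟩ μ, ?_⟩
  ext i j
  have hj := congrArg (fun v : S => (v : n → R) i) (b.sum_repr ⟨o.col j, ho j⟩)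
  simp only [Submodule.coe_sum, Submodule.coe_smul, Finset.sum_apply, Pi.smul_apply,
    smul_eq_mul] at hj
  exact hj.symm.trans (Finset.sum_congr rfl fun μ _ => mul_comm _ _)

end Module.Basis

theorem col_mem_Kspace {n : ℕ} {M o : Matrix (Fin n) (Fin n) ℂ} {A : Set (Fin n)}
    (ho : ∀ i j, (i ∉ A ∨ j ∉ A) → o i j = 0) (h : M * o = oᴴ * M) (j : Fin n) :
    o.col j ∈ Kspace M A := by
  refine ⟨fun i hi => ho i j (Or.inl hi), fun i hi => ?_⟩
  change (M * o) i j = 0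
  rw [h, Matrix.mul_apply]
  exact Finset.sum_eq_zero fun k _ => by simp [ho k i (Or.inr hi)]

theorem stmt_11_general (n : ℕ) (M : Matrix (Fin n) (Fin n) ℂ) (hM : M.PosDef)
    (A : Set (Fin n)) (K : ℕ)
    (w : Module.Basis (Fin K) ℂ (Kspace M A))
    (o : Matrix (Fin n) (Fin n) ℂ)
    (ho : ∀ i j, (i ∉ A ∨ j ∉ A) → o i j = 0) :
    M * o = oᴴ * M ↔
      ∃ α : Fin K → Fin K → ℂ, (∀ μ ν, α μ ν = starRingEnd ℂ (α ν μ)) ∧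
        ∀ i j, o i j = ∑ μ, ∑ ν,
          α μ ν * (w μ : Fin n → ℂ) i * starRingEnd ℂ (M.mulVec (w ν : Fin n → ℂ) j) := by
  set W := w.colMatrix
  have hentry (a : Matrix (Fin K) (Fin K) ℂ) : o = W * a * (M * W)ᴴ ↔ ∀ i j, o i j = ∑ μ, ∑ ν,
      a μ ν * (w μ : Fin n → ℂ) i * starRingEnd ℂ (M.mulVec (w ν : Fin n → ℂ) j) := by
    simp only [← Matrix.ext_iff, Matrix.mul_mul_conjTranspose_apply]
    rfl
  constructor
  · intro h
    obtain ⟨C, rfl⟩ := w.exists_eq_colMatrix_mul (col_mem_Kspace ho h)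
    obtain ⟨a, ha, rfl⟩ := Matrix.exists_isHermitian_eq_mul_conjTranspose hM.1
      (hM.conjTranspose_mul_mul_same w.mulVec_colMatrix_injective).isUnit h
    exact ⟨a, fun μ ν => (ha.apply μ ν).symm, (hentry a).mp (Matrix.mul_assoc _ _ _).symm⟩
  · rintro ⟨α, hα, hf⟩
    have hα' : (Matrix.of α).IsHermitian := Matrix.IsHermitian.ext fun μ ν => (hα μ ν).symm
    rw [(hentry (Matrix.of α)).mpr hf]
    exact Matrix.mul_mul_mul_conjTranspose_eq_conjTranspose_mul hM.1 hα' W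

/-- Let `M` be Hermitian positive definite, `A` nonempty, and `w` a basis of
`K(M, A)`. A matrix `o` supported on `A × A` satisfies `M * o = oᴴ * M` if and only if
`o i j = ∑ μ ν, α μ ν * (w μ) i * conj ((M · w ν) j)` for some Hermitian array of coefficients
`α`. -/
theorem stmt_11 (n : ℕ) (M : Matrix (Fin n) (Fin n) ℂ) (hM : M.PosDef)
    (A : Set (Fin n)) (hA : A.Nonempty) (K : ℕ)
    (w : Module.Basis (Fin K) ℂ (Kspace M A))
    (o : Matrix (Fin n) (Fin n) ℂ)
    (ho : ∀ i j, (i ∉ A ∨ j ∉ A) → o i j = 0) :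
    M * o = oᴴ * M ↔
      ∃ α : Fin K → Fin K → ℂ, (∀ μ ν, α μ ν = starRingEnd ℂ (α ν μ)) ∧
        ∀ i j, o i j = ∑ μ, ∑ ν,
          α μ ν * (w μ : Fin n → ℂ) i * starRingEnd ℂ (M.mulVec (w ν : Fin n → ℂ) j) :=
  stmt_11_general n M hM A K w o ho
end

section
/- Let M be an n×n Hermitian positive-definite complex matrix and fix an index i ∈ {1,…,n}. There exists a nonzero n×n complex matrix o with o_{jk} = 0 unless j = k = i, satisfying M · o = oᴴ · M, if and only if M_{ji} = 0 for all j ≠ i. -/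
open scoped ComplexOrder Matrix

/-- Let `M` be Hermitian positive definite and fix a site `i`. A nonzero matrix
`o` supported on the single entry `(i, i)` with `M * o = oᴴ * M` exists if and only if
`M j i = 0` for all `j ≠ i` (the reduced metric block-reduces at site `i`). -/
theorem stmt_14 (n : ℕ) (M : Matrix (Fin n) (Fin n) ℂ) (hM : M.PosDef) (i : Fin n) :
    (∃ o : Matrix (Fin n) (Fin n) ℂ, o ≠ 0 ∧
      (∀ j k, ¬(j = i ∧ k = i) → o j k = 0) ∧ M * o = oᴴ * M) ↔
    ∀ j, j ≠ i → M j i = 0 := by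
  have hHerm : M.IsHermitian := hM.1
  constructor
  · rintro ⟨o, hne, hsupp, heq⟩ j hj
    have hc : o i i ≠ 0 := by
      intro h0
      apply hne
      ext a b
      by_cases hab : a = i ∧ b = i
      · obtain ⟨ha, hb⟩ := hab; subst ha; subst hb; simpa using h0
      · simpa using hsupp a b hab
    have h1 := congrFun (congrFun heq j) i
    have hL : (M * o) j i = M j i * o i i := by
      rw [Matrix.mul_apply]
      rw [Finset.sum_eq_single i]
      · intro b _ hb
        rw [hsupp b i (by tauto), mul_zero]
      · intro h; exact absurd (Finset.mem_univ i) h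
    have hR : (oᴴ * M) j i = 0 := by
      rw [Matrix.mul_apply]
      apply Finset.sum_eq_zero
      intro b _
      have : oᴴ j b = 0 := by
        simp only [Matrix.conjTranspose_apply]
        rw [hsupp b j (by tauto)]
        simp
      rw [this, zero_mul]
    rw [hL, hR] at h1
    exact (mul_eq_zero.mp h1).resolve_right hc
  · intro hcol
    set o : Matrix (Fin n) (Fin n) ℂ :=
      Matrix.of (fun j k => if j = i ∧ k = i then (1 : ℂ) else 0) with ho
    have hoii : o i i = 1 := by simp [ho]
    have hsupp : ∀ j k, ¬(j = i ∧ k = i) → o j k = 0 := by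
      intro j k hjk; simp only [ho, Matrix.of_apply]; rw [if_neg hjk]
    refine ⟨o, ?_, hsupp, ?_⟩
    · intro h
      have := congrFun (congrFun h i) i
      rw [hoii] at this
      simp at this
    · have hrow : ∀ k, k ≠ i → M i k = 0 := by
        intro k hk
        have h2 := hHerm.apply k i
        rw [hcol k hk] at h2
        have h3 := congrArg star h2
        simpa using h3
      have hii : (starRingEnd ℂ) (M i i) = M i i := hHerm.apply i i
      ext a b
      have hL : (M * o) a b = if b = i then M a i else 0 := by
        rw [Matrix.mul_apply, Finset.sum_eq_single i]
        · rw [ho]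
          by_cases hb : b = i
          · subst hb; simp
          · simp [hb]
        · intro x _ hx; rw [hsupp x b (by tauto), mul_zero]
        · intro h; exact absurd (Finset.mem_univ i) h
      have hR : (oᴴ * M) a b = if a = i then M i b else 0 := by
        rw [Matrix.mul_apply, Finset.sum_eq_single i]
        · simp only [Matrix.conjTranspose_apply, ho, Matrix.of_apply]
          by_cases ha : a = i
          · subst ha; simp
          · simp [ha]
        · intro x _ hx
          have : oᴴ a x = 0 := by
            simp only [Matrix.conjTranspose_apply]
            rw [hsupp x a (by tauto)]; simp
          rw [this, zero_mul]
        · intro h; exact absurd (Finset.mem_univ i) h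
      rw [hL, hR]
      by_cases ha : a = i <;> by_cases hb : b = i
      · subst ha; subst hb; simp
      · subst ha; simp [hb, hrow b hb]
      · subst hb; simp [ha, hcol a ha]
      · simp [ha, hb]
end

section
/- Let M be an n×n Hermitian positive-definite complex matrix, let f : {1,…,n} → {1,…,n} be an involution (f ∘ f = id), and suppose M_{ij} ≠ 0 if and only if (i = j or i = f(j)). Let A ⊆ {1,…,n} be nonempty. Then there exists an extensively local reduced observable for M on A — i.e. an n×n matrix o supported on A×A with M·o = oᴴ·M such that for every i ∈ A there is j ∈ A with o_{ij} ≠ 0 or o_{ji} ≠ 0 — if and only if f(A) = A. -/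
/-!
Commuting with `M` relates row `f i` of `M * o` to row `i` of `o`, and column `i` of `oᴴ * M`
to rows `i` and `f i` of `o`. If `i ∈ A` but `f i ∉ A`, the first relation forces row `i` of `o`
to vanish (as `M (f i) i ≠ 0`), and then the second says that `M` kills column `i` of `o`, which
vanishes too since `M` is invertible; so `i` cannot be covered by `o`. Conversely, if `A` is
`f`-invariant then `M` is block diagonal for the splitting `A ⊔ Aᶜ`, so it commutes with the
orthogonal projection onto `A`, which is an extensively local reduced observable.
-/

open Matrix Function Set
open scoped ComplexOrder

theorem Function.Involutive.image_eq_self_iff_mapsTo {α : Type*} {f : α → α}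
    (hf : Involutive f) {A : Set α} : f '' A = A ↔ MapsTo f A A :=
  ⟨fun h _ hx => h.subset (mem_image_of_mem f hx),
    fun h => Subset.antisymm h.image_subset fun x hx => ⟨f x, h hx, hf x⟩⟩

namespace Matrix

theorem apply_eq_zero_of_ne_of_ne {ι α : Type*} [Zero α] {M : Matrix ι ι α} {f : ι → ι}
    (hMf : ∀ i j, M i j ≠ 0 ↔ (i = j ∨ i = f j)) {k j : ι} (hkj : k ≠ j) (hkf : k ≠ f j) :
    M k j = 0 :=
  not_ne_iff.1 fun h => ((hMf k j).1 h).elim hkj hkf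

variable {ι K : Type*} [Fintype ι] [DecidableEq ι] [Semiring K] [StarRing K]
  {M o : Matrix ι ι K} {A : Set ι}

theorem mul_diagonal_indicator_eq_conjTranspose_mul
    (hM : ∀ i j, M i j ≠ 0 → (i ∈ A ↔ j ∈ A)) :
    M * diagonal (A.indicator 1) = (diagonal (A.indicator 1))ᴴ * M := by
  ext i j
  by_cases hij : M i j = 0
  · simp [hij]
  · by_cases hj : j ∈ A
    · simp [indicator_of_mem hj, indicator_of_mem ((hM i j hij).2 hj)]
    · simp [indicator_of_notMem hj, indicator_of_notMem (mt (hM i j hij).1 hj)]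

section BlockSparse

variable [NoZeroDivisors K] {f : ι → ι}

theorem row_eq_zero_of_apply_notMem (hf : Involutive f)
    (hMf : ∀ i j, M i j ≠ 0 ↔ (i = j ∨ i = f j))
    (hsupp : ∀ i j, (i ∉ A ∨ j ∉ A) → o i j = 0) (hcomm : M * o = oᴴ * M)
    {i : ι} (hfi : f i ∉ A) (l : ι) : o i l = 0 := by
  have hMo : (M * o) (f i) l = M (f i) i * o i l := by
    rw [mul_apply]
    refine Finset.sum_eq_single i (fun k _ hki => ?_) (by simp)
    by_cases hk : k = f i
    · rw [hk, hsupp _ _ (Or.inl hfi), mul_zero]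
    · rw [apply_eq_zero_of_ne_of_ne hMf (Ne.symm hk) (hf.injective.ne (Ne.symm hki)), zero_mul]
  have hoM : (oᴴ * M) (f i) l = 0 :=
    Finset.sum_eq_zero fun k _ => by simp [hsupp k (f i) (Or.inr hfi)]
  have hMfi : M (f i) i ≠ 0 := (hMf _ _).2 (Or.inr rfl)
  rw [hcomm, hoM] at hMo
  exact (mul_eq_zero.1 hMo.symm).resolve_left hMfi

theorem col_eq_zero_of_apply_notMem (hM : IsUnit M) (hf : Involutive f)
    (hMf : ∀ i j, M i j ≠ 0 ↔ (i = j ∨ i = f j))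
    (hsupp : ∀ i j, (i ∉ A ∨ j ∉ A) → o i j = 0) (hcomm : M * o = oᴴ * M)
    {i : ι} (hfi : f i ∉ A) : (fun l => o l i) = 0 := by
  refine mulVec_injective_of_isUnit hM ?_
  ext l
  change (M * o) l i = (M *ᵥ 0) l
  rw [hcomm, mulVec_zero, Pi.zero_apply, mul_apply]
  refine Finset.sum_eq_zero fun k _ => ?_
  by_cases hki : k = i
  · simp [hki, row_eq_zero_of_apply_notMem hf hMf hsupp hcomm hfi]
  by_cases hkf : k = f i
  · simp [hkf, hsupp _ _ (Or.inl hfi)]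
  · rw [apply_eq_zero_of_ne_of_ne hMf hki hkf, mul_zero]

end BlockSparse

end Matrix

theorem stmt_15_general (n : ℕ) (M : Matrix (Fin n) (Fin n) ℂ) (hM : M.PosDef)
    (f : Fin n → Fin n) (hf : ∀ i, f (f i) = i)
    (hMf : ∀ i j, M i j ≠ 0 ↔ (i = j ∨ i = f j))
    (A : Set (Fin n)) :
    (∃ o : Matrix (Fin n) (Fin n) ℂ,
      (∀ i j, (i ∉ A ∨ j ∉ A) → o i j = 0) ∧ M * o = oᴴ * M ∧
      ∀ i ∈ A, ∃ j ∈ A, o i j ≠ 0 ∨ o j i ≠ 0) ↔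
    f '' A = A := by
  rw [Involutive.image_eq_self_iff_mapsTo hf]
  constructor
  · rintro ⟨o, hsupp, hcomm, hext⟩ i hi
    by_contra hfi
    obtain ⟨j, -, hj⟩ := hext i hi
    have hcol := col_eq_zero_of_apply_notMem hM.isUnit hf hMf hsupp hcomm hfi
    exact hj.elim (· (row_eq_zero_of_apply_notMem hf hMf hsupp hcomm hfi j))
      (· (congrFun hcol j))
  · intro hmaps
    have hblock : ∀ i j, M i j ≠ 0 → (i ∈ A ↔ j ∈ A) := fun i j hij => by
      rcases (hMf i j).1 hij with rfl | rfl
      · rfl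
      · exact ⟨fun h => hf j ▸ hmaps h, fun h => hmaps h⟩
    refine ⟨diagonal (A.indicator 1), fun i j hij => ?_,
      mul_diagonal_indicator_eq_conjTranspose_mul hblock, fun i hi => ⟨i, hi, Or.inl ?_⟩⟩
    · by_cases h : i = j
      · subst h
        simp [indicator_of_notMem (hij.elim id id)]
      · exact diagonal_apply_ne _ h
    · simp [indicator_of_mem hi]

/-- Let `M` be a Hermitian positive-definite reduced metric decomposing into
`1 × 1` and `2 × 2` blocks with associated involution `f` (so `M i j ≠ 0 ↔ i = j ∨ i = f j`),
and let `A` be a nonempty set of sites. Then an extensively local reduced observable for `M` on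
`A` exists if and only if `A` is invariant under `f`, i.e. `f '' A = A`. -/
theorem stmt_15 (n : ℕ) (M : Matrix (Fin n) (Fin n) ℂ) (hM : M.PosDef)
    (f : Fin n → Fin n) (hf : ∀ i, f (f i) = i)
    (hMf : ∀ i j, M i j ≠ 0 ↔ (i = j ∨ i = f j))
    (A : Set (Fin n)) (hA : A.Nonempty) :
    (∃ o : Matrix (Fin n) (Fin n) ℂ,
      (∀ i j, (i ∉ A ∨ j ∉ A) → o i j = 0) ∧ M * o = oᴴ * M ∧
      ∀ i ∈ A, ∃ j ∈ A, o i j ≠ 0 ∨ o j i ≠ 0) ↔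
    f '' A = A :=
  stmt_15_general n M hM f hf hMf A
end

section
/- Let M be an n×n Hermitian positive-definite complex matrix and let A ⊆ {1,…,n} be nonempty. For S ⊆ {1,…,n} let K(M,S) = {v ∈ ℂⁿ : v_j = 0 for all j ∉ S, and (M·v)_i = 0 for all i ∉ S}. Then there exists an extensively local reduced observable for M on A — i.e. an n×n matrix o supported on A×A with M·o = oᴴ·M such that for every i ∈ A there is j ∈ A with o_{ij} ≠ 0 or o_{ji} ≠ 0 — if and only if dim K(M,A) > dim K(M,S) for every proper subset S ⊊ A. -/
open scoped ComplexOrder Matrix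

/-!
Since `K(M, ·)` is monotone, the dimension condition says exactly that for each `i ∈ A` some
`v ∈ K(M, A)` has `v i ≠ 0` or `(M v) i ≠ 0`. Every column of an observable `o` lies in `K(M, A)`,
and `M o` is Hermitian, so a nonzero entry `o i j` or `o j i` yields such a vector (the column `j`,
resp. a column `k` with `(M o) i k ≠ 0`). Conversely, `K(M, A)` is not a finite union of the proper
subspaces `K(M, A \ {i})`, so one `v` works for all `i` at once, and `o = v (M v)ᴴ` is then an
extensively local observable: `M o = (M v)(M v)ᴴ = oᴴ M`.
-/

theorem Submodule.exists_mem_forall_notMem_of_forall_not_le {K V ι : Type*} [Field K]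
    [Infinite K] [AddCommGroup V] [Module K V] [Finite ι] {p : Submodule K V}
    {q : ι → Submodule K V} (h : ∀ i, ¬ p ≤ q i) : ∃ v ∈ p, ∀ i, v ∉ q i := by
  by_contra! hcover
  obtain ⟨i, hi⟩ := Subspace.exists_eq_top_of_iUnion_eq_univ (p := fun i => (q i).comap p.subtype)
    (Set.eq_univ_of_forall fun v => Set.mem_iUnion.2 (hcover v v.2))
  exact h i fun v hv => Submodule.eq_top_iff'.1 hi ⟨v, hv⟩

namespace Matrix

variable {n : ℕ} {M o : Matrix (Fin n) (Fin n) ℂ} {A S T : Set (Fin n)} {v : Fin n → ℂ}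
  {i : Fin n}

theorem Kspace_mono (h : S ⊆ T) : Kspace M S ≤ Kspace M T :=
  fun _ hv => ⟨fun j hj => hv.1 j (hj <| h ·), fun i hi => hv.2 i (hi <| h ·)⟩

theorem mem_Kspace_diff_singleton_iff (hv : v ∈ Kspace M A) :
    v ∈ Kspace M (A \ {i}) ↔ v i = 0 ∧ (M *ᵥ v) i = 0 := by
  refine ⟨fun h => ⟨h.1 i fun hi => hi.2 rfl, h.2 i fun hi => hi.2 rfl⟩, fun h => ?_⟩
  refine ⟨fun j hj => ?_, fun j hj => ?_⟩
  · by_cases hji : j = i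
    · exact hji ▸ h.1
    · exact hv.1 j fun hjA => hj ⟨hjA, hji⟩
  · by_cases hji : j = i
    · exact hji ▸ h.2
    · exact hv.2 j fun hjA => hj ⟨hjA, hji⟩

theorem finrank_Kspace_lt_iff :
    (∀ S : Set (Fin n), S ⊂ A →
      Module.finrank ℂ (Kspace M S) < Module.finrank ℂ (Kspace M A)) ↔
    ∀ i ∈ A, ¬ Kspace M A ≤ Kspace M (A \ {i}) := by
  constructor
  · intro h i hi hle
    have hssub : A \ {i} ⊂ A := Set.sdiff_singleton_ssubset.2 hi
    have heq : Kspace M (A \ {i}) = Kspace M A := le_antisymm (Kspace_mono hssub.subset) hle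
    exact (h _ hssub).ne (by rw [heq])
  · intro h S hSA
    obtain ⟨i, hiA, hiS⟩ := Set.exists_of_ssubset hSA
    refine Submodule.finrank_lt_finrank_of_lt <| lt_of_le_of_lt (Kspace_mono (T := A \ {i}) ?_)
      (lt_of_le_not_ge (Kspace_mono Set.sdiff_subset) (h i hiA))
    exact fun j hj => ⟨hSA.subset hj, fun hji => hiS (hji ▸ hj)⟩

def IsExtensivelyLocalObservable (M : Matrix (Fin n) (Fin n) ℂ) (A : Set (Fin n))
    (o : Matrix (Fin n) (Fin n) ℂ) : Prop :=
  (∀ i j, (i ∉ A ∨ j ∉ A) → o i j = 0) ∧ M * o = oᴴ * M ∧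
    ∀ i ∈ A, ∃ j ∈ A, o i j ≠ 0 ∨ o j i ≠ 0

theorem IsHermitian.mul_of_mul_eq_conjTranspose_mul (hM : M.IsHermitian)
    (h : M * o = oᴴ * M) : (M * o).IsHermitian := by
  rw [IsHermitian, conjTranspose_mul, hM.eq, h]

theorem col_mem_Kspace_of_isExtensivelyLocalObservable (ho : IsExtensivelyLocalObservable M A o)
    (k : Fin n) : (fun r => o r k) ∈ Kspace M A := by
  obtain ⟨hsupp, hcomm, -⟩ := ho
  refine ⟨fun r hr => hsupp r k (Or.inl hr), fun r hr => ?_⟩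
  change (M * o) r k = 0
  rw [hcomm, mul_apply]
  exact Finset.sum_eq_zero fun t _ => by simp [hsupp t r (Or.inr hr)]

theorem not_Kspace_le_diff_singleton_of_isExtensivelyLocalObservable (hM : M.IsHermitian)
    (hinj : Function.Injective M.mulVec) (ho : IsExtensivelyLocalObservable M A o) (hi : i ∈ A) :
    ¬ Kspace M A ≤ Kspace M (A \ {i}) := by
  suffices ∃ k, o i k ≠ 0 ∨ (M * o) i k ≠ 0 by
    obtain ⟨k, hk⟩ := this
    intro hle
    have hcol := col_mem_Kspace_of_isExtensivelyLocalObservable ho k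
    have hcol_i := (mem_Kspace_diff_singleton_iff hcol).1 (hle hcol)
    exact hk.elim (· hcol_i.1) (· hcol_i.2)
  obtain ⟨j, -, hj | hj⟩ := ho.2.2 i hi
  · exact ⟨j, .inl hj⟩
  · -- column `i` of `o` is nonzero, hence so is column `i` of `M * o`, and `M * o` is Hermitian
    have hcol_ne : (fun r => o r i) ≠ 0 := fun h0 => hj (congrFun h0 j)
    obtain ⟨k, hk⟩ := Function.ne_iff.1 (hinj.ne hcol_ne)
    rw [mulVec_zero] at hk
    refine ⟨k, .inr ?_⟩
    rw [← (hM.mul_of_mul_eq_conjTranspose_mul ho.2.1).apply i k]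
    exact star_ne_zero.2 hk

theorem exists_mem_ne_zero_of_mem_Kspace (hv : v ∈ Kspace M A) (hv0 : v ≠ 0) :
    ∃ j ∈ A, v j ≠ 0 := by
  obtain ⟨j, hj⟩ := Function.ne_iff.1 hv0
  exact ⟨j, by_contra fun hjA => hj (hv.1 j hjA), hj⟩

theorem exists_mem_mulVec_ne_zero_of_mem_Kspace (hinj : Function.Injective M.mulVec)
    (hv : v ∈ Kspace M A) (hv0 : v ≠ 0) : ∃ j ∈ A, (M *ᵥ v) j ≠ 0 := by
  obtain ⟨j, hj⟩ := Function.ne_iff.1 (hinj.ne hv0)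
  rw [mulVec_zero] at hj
  exact ⟨j, by_contra fun hjA => hj (hv.2 j hjA), hj⟩

theorem isExtensivelyLocalObservable_vecMulVec (hM : M.IsHermitian)
    (hinj : Function.Injective M.mulVec) (hv : v ∈ Kspace M A)
    (hactive : ∀ i ∈ A, v i ≠ 0 ∨ (M *ᵥ v) i ≠ 0) :
    IsExtensivelyLocalObservable M A (vecMulVec v (star (M *ᵥ v))) := by
  refine ⟨?_, ?_, fun i hi => ?_⟩
  · rintro i j (hi | hj)
    · simp [vecMulVec_apply, hv.1 i hi]
    · simp [vecMulVec_apply, hv.2 j hj]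
  · rw [mul_vecMulVec, conjTranspose_vecMulVec, star_star, vecMulVec_mul, star_mulVec, hM.eq]
  · rcases hactive i hi with hvi | hwi
    · have hv0 : v ≠ 0 := fun h0 => hvi (congrFun h0 i)
      obtain ⟨j, hjA, hwj⟩ := exists_mem_mulVec_ne_zero_of_mem_Kspace hinj hv hv0
      exact ⟨j, hjA, .inl (mul_ne_zero hvi (star_ne_zero.2 hwj))⟩
    · have hv0 : v ≠ 0 := fun h0 => hwi (by simp [h0])
      obtain ⟨j, hjA, hvj⟩ := exists_mem_ne_zero_of_mem_Kspace hv hv0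
      exact ⟨j, hjA, .inr (mul_ne_zero hvj (star_ne_zero.2 hwi))⟩

end Matrix

open Matrix in
theorem stmt_16_general (n : ℕ) (M : Matrix (Fin n) (Fin n) ℂ) (hM : M.PosDef)
    (A : Set (Fin n)) :
    (∃ o : Matrix (Fin n) (Fin n) ℂ,
      (∀ i j, (i ∉ A ∨ j ∉ A) → o i j = 0) ∧ M * o = oᴴ * M ∧
      ∀ i ∈ A, ∃ j ∈ A, o i j ≠ 0 ∨ o j i ≠ 0) ↔
    ∀ S : Set (Fin n), S ⊂ A →
      Module.finrank ℂ (Kspace M S) < Module.finrank ℂ (Kspace M A) := by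
  have hinj : Function.Injective M.mulVec := mulVec_injective_iff_isUnit.2 hM.isUnit
  rw [finrank_Kspace_lt_iff]
  constructor
  · rintro ⟨o, ho⟩ i hi
    exact not_Kspace_le_diff_singleton_of_isExtensivelyLocalObservable hM.1 hinj ho hi
  · intro h
    obtain ⟨v, hv, hgeneric⟩ :=
      Submodule.exists_mem_forall_notMem_of_forall_not_le fun i : A => h i i.2
    refine ⟨_, isExtensivelyLocalObservable_vecMulVec hM.1 hinj hv fun i hi => ?_⟩
    exact not_and_or.1 <| (mem_Kspace_diff_singleton_iff hv).not.1 (hgeneric ⟨i, hi⟩)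

/-- Let `M` be Hermitian positive definite and `A` nonempty. An extensively
local reduced observable for `M` on `A` exists if and only if
`dim K(M, A) > dim K(M, S)` for every proper subset `S ⊊ A`. -/
theorem stmt_16 (n : ℕ) (M : Matrix (Fin n) (Fin n) ℂ) (hM : M.PosDef)
    (A : Set (Fin n)) (hA : A.Nonempty) :
    (∃ o : Matrix (Fin n) (Fin n) ℂ,
      (∀ i j, (i ∉ A ∨ j ∉ A) → o i j = 0) ∧ M * o = oᴴ * M ∧
      ∀ i ∈ A, ∃ j ∈ A, o i j ≠ 0 ∨ o j i ≠ 0) ↔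
    ∀ S : Set (Fin n), S ⊂ A →
      Module.finrank ℂ (Kspace M S) < Module.finrank ℂ (Kspace M A) :=
  stmt_16_general n M hM A
end

section
/- Let P, η, O be n×n complex matrices. Suppose P has real entries, Pᵀ = P, and P² = 1; suppose η satisfies the PT-symmetry condition P · conj(η) · P = η, where conj denotes entrywise complex conjugation; and suppose η · O = Oᴴ · η. Then the PT-transform O' = P · conj(O) · P also satisfies η · O' = O'ᴴ · η. -/
open scoped ComplexOrder Matrix

/-- Let `P` be a real symmetric involution (a parity operator), `η` a
PT-symmetric metric (`P * conj η * P = η`), and `O` quasi-Hermitian with respect to `η`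
(`η * O = Oᴴ * η`). Then the PT-transform `O' = P * conj O * P` is also quasi-Hermitian with
respect to `η`. -/
theorem stmt_17 (n : ℕ) (P η O : Matrix (Fin n) (Fin n) ℂ)
    (hPreal : ∀ i j, (P i j).im = 0) (hPsymm : Pᵀ = P) (hP2 : P * P = 1)
    (hηPT : P * η.map (starRingEnd ℂ) * P = η)
    (hQH : η * O = Oᴴ * η) :
    η * (P * O.map (starRingEnd ℂ) * P) = (P * O.map (starRingEnd ℂ) * P)ᴴ * η := by
  have hOc : (O.map (starRingEnd ℂ))ᴴ = Oᵀ := by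
    ext i j
    simp [Matrix.conjTranspose_apply, Matrix.transpose_apply]
  have hOHc : Oᴴ.map (starRingEnd ℂ) = Oᵀ := by
    ext i j
    simp [Matrix.conjTranspose_apply, Matrix.transpose_apply]
  have hPH : Pᴴ = P := by
    have hPc : P.map (starRingEnd ℂ) = P := by
      ext i j
      exact Complex.conj_eq_iff_im.mpr (hPreal i j)
    calc Pᴴ = (P.map (starRingEnd ℂ))ᵀ := rfl
      _ = Pᵀ := by rw [hPc]
      _ = P := hPsymm
  calc η * (P * O.map (starRingEnd ℂ) * P)
      = (P * η.map (starRingEnd ℂ) * P) * (P * O.map (starRingEnd ℂ) * P) := by rw [hηPT]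
    _ = P * η.map (starRingEnd ℂ) * (P * P) * O.map (starRingEnd ℂ) * P := by
        simp only [Matrix.mul_assoc]
    _ = P * ((η * O).map (starRingEnd ℂ)) * P := by
        rw [hP2, Matrix.mul_one, Matrix.map_mul]
        simp only [Matrix.mul_assoc]
    _ = P * (Oᴴ.map (starRingEnd ℂ) * η.map (starRingEnd ℂ)) * P := by
        rw [hQH, Matrix.map_mul]
    _ = P * Oᵀ * η.map (starRingEnd ℂ) * P := by
        rw [hOHc]; simp only [Matrix.mul_assoc]
    _ = (P * O.map (starRingEnd ℂ) * P)ᴴ * η := by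
        have hP2' : ∀ X : Matrix (Fin n) (Fin n) ℂ, P * (P * X) = X := fun X => by
          rw [← Matrix.mul_assoc, hP2, Matrix.one_mul]
        simp only [Matrix.conjTranspose_mul, hOc, hPH]
        conv_rhs => rw [← hηPT]
        simp only [Matrix.mul_assoc, hP2']
end

section
/- Fix n ≥ 2 and γ ∈ ℂ with Im(γ) ≠ 0 and |γ| ≠ 1. Define the n×n complex matrix M by M_{ii} = 1, M_{ij} = −𝑖·Im(γ)·(conj γ)^{j−i−1} for i < j, and M_{ij} = 𝑖·Im(γ)·γ^{i−j−1} for i > j, where 𝑖 is the imaginary unit. Let 1 ≤ a < b ≤ n and let C = {a, a+1, …, b}. Then the dimension of the subspace K(M,C) = {v ∈ ℂⁿ : v_j = 0 for all j ∉ C, and (M·v)_i = 0 for all i ∉ C} equals (b − a + 1) − 2 + (1 if a = 1 else 0) + (1 if b = n else 0). -/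
open scoped ComplexOrder Matrix

/-- The reduced metric of the PT-symmetric tight-binding chain with impurities `γ, conj γ` at the
two ends of the lattice (farthest impurities, `m = 1`, uniform hopping `t = 1`):
`M i i = 1`, `M i j = -I · Im γ · (conj γ)^(j - i - 1)` for `i < j`, and
`M i j = I · Im γ · γ^(i - j - 1)` for `i > j`. -/
noncomputable def Mgamma (n : ℕ) (γ : ℂ) : Matrix (Fin n) (Fin n) ℂ :=
  Matrix.of fun i j =>
    if (i : ℕ) = (j : ℕ) then 1
    else if (i : ℕ) < (j : ℕ) then
      -Complex.I * (γ.im : ℂ) * (starRingEnd ℂ γ) ^ ((j : ℕ) - (i : ℕ) - 1)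
    else Complex.I * (γ.im : ℂ) * γ ^ ((i : ℕ) - (j : ℕ) - 1)


/-!
For `v` supported on `C = [a, b]` and a row `i < a`, every entry `M i j` with `j ∈ C` factors as
`-I Im γ · conj γ ^ (a - 1 - i) · conj γ ^ (j - a)`, so all the rows left of `C` are multiples of one
functional `v ↦ ∑ j, conj γ ^ (j - a) v j`; symmetrically the rows right of `C` are multiples of
`v ↦ ∑ j, γ ^ (b - j) v j`. Hence `K(M, C)` is cut out of the `|C|`-dimensional space of vectors
supported on `C` by those of these two functionals whose rows exist, i.e. the left one iff `C`
has a left neighbour and the right one iff it has a right neighbour. On `e_a` and `e_b` the pair takes the values `(1, γ ^ (b - a))` and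
`(conj γ ^ (b - a), 1)`, whose determinant `1 - |γ| ^ (2 (b - a))` vanishes only when `|γ| = 1`;
so the two functionals are independent and each one imposed lowers the dimension by one.
-/

open Module

section LinearAlgebra

variable {K V W : Type*} [DivisionRing K] [AddCommGroup V] [Module K V] [FiniteDimensional K V]
  [AddCommGroup W] [Module K W] [FiniteDimensional K W]

theorem finrank_comap_add_finrank_of_surjective {φ : V →ₗ[K] W} (hφ : Function.Surjective φ)
    (P : Submodule K W) :
    finrank K (P.comap φ) + finrank K W = finrank K V + finrank K P := by
  have hsurj : Function.Surjective (P.mkQ ∘ₗ φ) := P.mkQ_surjective.comp hφ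
  have hrank := LinearMap.finrank_range_add_finrank_ker (P.mkQ ∘ₗ φ)
  rw [LinearMap.range_eq_top.2 hsurj, finrank_top, LinearMap.ker_comp,
    Submodule.ker_mkQ] at hrank
  have hquot := Submodule.finrank_quotient_add_finrank P
  omega

theorem finrank_inf_comap_add_finrank {φ : V →ₗ[K] W} {S : Submodule K V}
    (hφ : Function.Surjective (φ ∘ₗ S.subtype)) (P : Submodule K W) :
    finrank K ↥(S ⊓ P.comap φ) + finrank K W = finrank K S + finrank K P := by
  rw [← Submodule.map_comap_subtype, Submodule.finrank_map_subtype_eq, ← Submodule.comap_comp]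
  exact finrank_comap_add_finrank_of_surjective hφ P

end LinearAlgebra

section SupportedOn

variable {ι : Type*}

def supportedOn (R : Type*) [Semiring R] (s : Set ι) : Submodule R (ι → R) :=
  LinearMap.ker (LinearMap.funLeft R R ((↑) : ↥sᶜ → ι))

theorem mem_supportedOn {R : Type*} [Semiring R] {s : Set ι} {v : ι → R} :
    v ∈ supportedOn R s ↔ ∀ j ∉ s, v j = 0 := by
  simp [supportedOn, funext_iff]

theorem finrank_supportedOn {R : Type*} [DivisionRing R] [Finite ι] (s : Set ι) :
    finrank R (supportedOn R s) = Nat.card s := by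
  have := Fintype.ofFinite ι
  classical
  have hrank := LinearMap.finrank_range_add_finrank_ker (LinearMap.funLeft R R ((↑) : ↥sᶜ → ι))
  rw [LinearMap.range_eq_top.2 (LinearMap.funLeft_surjective_of_injective _ _ _
    Subtype.val_injective), finrank_top, Module.finrank_fintype_fun_eq_card,
    Module.finrank_fintype_fun_eq_card] at hrank
  have hsplit := Set.ncard_add_ncard_compl s
  simp only [← Nat.card_eq_fintype_card, Nat.card_coe_set_eq] at hrank hsplit
  rw [supportedOn, Nat.card_coe_set_eq]
  omega

end SupportedOn

theorem Fin.natCard_Icc {n : ℕ} (a b : Fin n) : Nat.card (Set.Icc a b) = b + 1 - a := by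
  rw [← Finset.coe_Icc, Nat.card_coe_set_eq, Set.ncard_coe_finset, Fin.card_Icc]

section Chain

variable {n : ℕ}

noncomputable def boundaryMap (γ : ℂ) (a b : Fin n) : (Fin n → ℂ) →ₗ[ℂ] Fin 2 → ℂ :=
  Fintype.linearCombination ℂ fun j => ![starRingEnd ℂ γ ^ ((j : ℕ) - a), γ ^ ((b : ℕ) - j)]

theorem boundaryMap_apply_zero (γ : ℂ) (a b : Fin n) (v : Fin n → ℂ) :
    boundaryMap γ a b v 0 = ∑ j, v j * starRingEnd ℂ γ ^ ((j : ℕ) - a) := by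
  simp [boundaryMap, Fintype.linearCombination_apply, Finset.sum_apply]

theorem boundaryMap_apply_one (γ : ℂ) (a b : Fin n) (v : Fin n → ℂ) :
    boundaryMap γ a b v 1 = ∑ j, v j * γ ^ ((b : ℕ) - j) := by
  simp [boundaryMap, Fintype.linearCombination_apply, Finset.sum_apply]

theorem mulVec_Mgamma_apply_of_lt {γ : ℂ} {a b i : Fin n} {v : Fin n → ℂ}
    (hv : v ∈ supportedOn ℂ (Set.Icc a b)) (hi : i < a) :
    (Mgamma n γ *ᵥ v) i =
      -Complex.I * γ.im * starRingEnd ℂ γ ^ ((a : ℕ) - i - 1) * boundaryMap γ a b v 0 := by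
  rw [Matrix.mulVec, dotProduct, boundaryMap_apply_zero, Finset.mul_sum]
  refine Finset.sum_congr rfl fun j _ => ?_
  by_cases hj : j ∈ Set.Icc a b
  · have hij : (i : ℕ) < j := lt_of_lt_of_le hi hj.1
    have hexp : (j : ℕ) - i - 1 = ((a : ℕ) - i - 1) + ((j : ℕ) - a) := by
      have : (a : ℕ) ≤ j := hj.1
      omega
    simp only [Mgamma, Matrix.of_apply, hij.ne, hij, if_false, if_true, hexp, pow_add]
    ring
  · simp [mem_supportedOn.1 hv j hj]

theorem mulVec_Mgamma_apply_of_gt {γ : ℂ} {a b i : Fin n} {v : Fin n → ℂ}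
    (hv : v ∈ supportedOn ℂ (Set.Icc a b)) (hi : b < i) :
    (Mgamma n γ *ᵥ v) i =
      Complex.I * γ.im * γ ^ ((i : ℕ) - b - 1) * boundaryMap γ a b v 1 := by
  rw [Matrix.mulVec, dotProduct, boundaryMap_apply_one, Finset.mul_sum]
  refine Finset.sum_congr rfl fun j _ => ?_
  by_cases hj : j ∈ Set.Icc a b
  · have hji : (j : ℕ) < i := lt_of_le_of_lt hj.2 hi
    have hexp : (i : ℕ) - j - 1 = ((i : ℕ) - b - 1) + ((b : ℕ) - j) := by
      have : (j : ℕ) ≤ b := hj.2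
      omega
    simp only [Mgamma, Matrix.of_apply, hji.ne', hji.not_gt, if_false, hexp, pow_add]
    ring
  · simp [mem_supportedOn.1 hv j hj]

/-- Coordinate `0` (resp. `1`) of `boundaryMap γ a b v` is forced to vanish exactly when `a`
(resp. `b`) has a neighbour outside `[a, b]`; this set collects the unconstrained coordinates. -/
def missingNeighbours (a b : Fin n) : Set (Fin 2) :=
  {k | k = 0 ∧ (a : ℕ) = 0 ∨ k = 1 ∧ (b : ℕ) = n - 1}

theorem mulVec_Mgamma_eq_zero_off_Icc_iff {γ : ℂ} (hγ : γ.im ≠ 0) {a b : Fin n} {v : Fin n → ℂ}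
    (hv : v ∈ supportedOn ℂ (Set.Icc a b)) :
    (∀ i ∉ Set.Icc a b, (Mgamma n γ *ᵥ v) i = 0) ↔
      ∀ k ∉ missingNeighbours a b, boundaryMap γ a b v k = 0 := by
  have hc : Complex.I * γ.im ≠ 0 := by simp [hγ]
  constructor
  · intro h k hk
    simp only [missingNeighbours, Set.mem_ofPred_eq, not_or, not_and] at hk
    fin_cases k
    · have ha : (a : ℕ) ≠ 0 := hk.1 rfl
      have hi : (⟨a - 1, by omega⟩ : Fin n) < a := Fin.lt_def.2 (by simp; omega)
      have h0 := h _ fun hmem => hi.not_ge hmem.1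
      rw [mulVec_Mgamma_apply_of_lt hv hi, show (a : ℕ) - (a - 1) - 1 = 0 by omega] at h0
      simpa [hc] using h0
    · have hb : (b : ℕ) ≠ n - 1 := hk.2 rfl
      have hi : b < (⟨b + 1, by omega⟩ : Fin n) := Fin.lt_def.2 (by simp)
      have h0 := h _ fun hmem => hi.not_ge hmem.2
      rw [mulVec_Mgamma_apply_of_gt hv hi, show (b : ℕ) + 1 - b - 1 = 0 by omega] at h0
      simpa [hc] using h0
  · intro h i hi
    rcases not_and_or.1 hi with hia | hbi
    · have hia := not_le.1 hia
      rw [mulVec_Mgamma_apply_of_lt hv hia,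
        h 0 (by simp [missingNeighbours]; omega), mul_zero]
    · have hbi := not_le.1 hbi
      rw [mulVec_Mgamma_apply_of_gt hv hbi,
        h 1 (by simp [missingNeighbours]; omega), mul_zero]

theorem card_missingNeighbours (a b : Fin n) :
    Nat.card (missingNeighbours a b) =
      (if (a : ℕ) = 0 then 1 else 0) + (if (b : ℕ) = n - 1 then 1 else 0) := by
  classical
  rw [Nat.card_eq_fintype_card, Fintype.card_subtype, Finset.card_filter, Fin.sum_univ_two]
  simp [missingNeighbours]

theorem Kspace_Mgamma_Icc {γ : ℂ} (hγ : γ.im ≠ 0) (a b : Fin n) :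
    Kspace (Mgamma n γ) (Set.Icc a b) =
      supportedOn ℂ (Set.Icc a b) ⊓
        (supportedOn ℂ (missingNeighbours a b)).comap (boundaryMap γ a b) := by
  ext v
  rw [Submodule.mem_inf, Submodule.mem_comap, mem_supportedOn, mem_supportedOn]
  exact and_congr_right fun hv => mulVec_Mgamma_eq_zero_off_Icc_iff hγ (mem_supportedOn.2 hv)

theorem conj_pow_mul_pow_ne_one {γ : ℂ} (hγ1 : ‖γ‖ ≠ 1) {p : ℕ} (hp : p ≠ 0) :
    starRingEnd ℂ γ ^ p * γ ^ p ≠ 1 := by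
  rw [← mul_pow, Complex.conj_mul', ← pow_mul]
  exact_mod_cast (pow_eq_one_iff_of_nonneg (norm_nonneg γ) (by omega)).not.2 hγ1

theorem surjective_boundaryMap_comp_subtype {γ : ℂ} (hγ1 : ‖γ‖ ≠ 1) {a b : Fin n} (hab : a < b) :
    Function.Surjective (boundaryMap γ a b ∘ₗ (supportedOn ℂ (Set.Icc a b)).subtype) := by
  have single_mem : ∀ k ∈ Set.Icc a b, Pi.single k 1 ∈ supportedOn ℂ (Set.Icc a b) :=
    fun k hk => mem_supportedOn.2 fun j hj => Pi.single_eq_of_ne (ne_of_mem_of_not_mem hk hj).symm 1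
  set p := (b : ℕ) - a
  have hd : 1 - starRingEnd ℂ γ ^ p * γ ^ p ≠ 0 :=
    sub_ne_zero.2 (conj_pow_mul_pow_ne_one hγ1 (by omega)).symm
  have hea : boundaryMap γ a b (Pi.single a 1) = ![1, γ ^ p] := by
    simp [boundaryMap, Fintype.linearCombination_apply_single, p]
  have heb : boundaryMap γ a b (Pi.single b 1) = ![starRingEnd ℂ γ ^ p, 1] := by
    simp [boundaryMap, Fintype.linearCombination_apply_single, p]
  intro w
  -- Cramer's rule for the values `![1, γ ^ p]`, `![conj γ ^ p, 1]` on `e_a`, `e_b`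
  refine ⟨((w 0 - starRingEnd ℂ γ ^ p * w 1) / (1 - starRingEnd ℂ γ ^ p * γ ^ p)) •
      ⟨Pi.single a 1, single_mem a ⟨le_rfl, hab.le⟩⟩ +
    ((w 1 - γ ^ p * w 0) / (1 - starRingEnd ℂ γ ^ p * γ ^ p)) •
      ⟨Pi.single b 1, single_mem b ⟨hab.le, le_rfl⟩⟩, ?_⟩
  ext k
  fin_cases k <;> simp [hea, heb] <;> field_simp <;> ring

end Chain

theorem stmt_18_general (n : ℕ) (γ : ℂ) (hγ : γ.im ≠ 0)
    (hγ1 : ‖γ‖ ≠ 1) (a b : Fin n) (hab : a < b) :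
    Module.finrank ℂ (Kspace (Mgamma n γ) (Set.Icc a b)) =
      ((b : ℕ) - (a : ℕ) + 1) - 2
        + (if (a : ℕ) = 0 then 1 else 0)
        + (if (b : ℕ) = n - 1 then 1 else 0) := by
  have h := finrank_inf_comap_add_finrank (surjective_boundaryMap_comp_subtype hγ1 hab)
    (supportedOn ℂ (missingNeighbours a b))
  rw [← Kspace_Mgamma_Icc hγ, finrank_supportedOn, finrank_supportedOn, finrank_fin_fun,
    Fin.natCard_Icc, card_missingNeighbours] at h
  have : (a : ℕ) < b := hab
  split_ifs at h ⊢ <;> omega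

/-- For `n ≥ 2`, `Im γ ≠ 0` and `|γ| ≠ 1`, and a connected interval
`C = {a, …, b}` with `a < b` (1-indexed: `1 ≤ a < b ≤ n`), the kernel `K(M, C)` of the
off-diagonal block of the reduced metric has dimension
`|C| - 2 + [a = 1] + [b = n]`. -/
theorem stmt_18 (n : ℕ) (hn : 2 ≤ n) (γ : ℂ) (hγ : γ.im ≠ 0)
    (hγ1 : ‖γ‖ ≠ 1) (a b : Fin n) (hab : a < b) :
    Module.finrank ℂ (Kspace (Mgamma n γ) (Set.Icc a b)) =
      ((b : ℕ) - (a : ℕ) + 1) - 2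
        + (if (a : ℕ) = 0 then 1 else 0)
        + (if (b : ℕ) = n - 1 then 1 else 0) :=
  stmt_18_general n γ hγ hγ1 a b hab
end

section
/- Fix n ≥ 2 and γ ∈ ℂ with Im(γ) ≠ 0 and |γ| = 1 (i.e. γ·conj γ = 1). Define the n×n complex matrix M by M_{ii} = 1, M_{ij} = −𝑖·Im(γ)·(conj γ)^{j−i−1} for i < j, and M_{ij} = 𝑖·Im(γ)·γ^{i−j−1} for i > j, where 𝑖 is the imaginary unit. Let 1 ≤ a ≤ b ≤ n with (a, b) ≠ (1, n), and let C = {a, a+1, …, b}. Then the dimension of the subspace K(M,C) = {v ∈ ℂⁿ : v_j = 0 for all j ∉ C, and (M·v)_i = 0 for all i ∉ C} equals (b − a + 1) − 1. -/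
open scoped ComplexOrder Matrix

noncomputable def gfun (m : ℕ) (c : ℂ) : (Fin m → ℂ) →ₗ[ℂ] ℂ where
  toFun w := ∑ k : Fin m, c ^ (k : ℕ) * w k
  map_add' v w := by simp [mul_add, Finset.sum_add_distrib]
  map_smul' r w := by simp [Finset.mul_sum, mul_left_comm]

noncomputable def Ffun {n m : ℕ} (emb : Fin m → Fin n) : (Fin m → ℂ) →ₗ[ℂ] (Fin n → ℂ) where
  toFun w := ∑ k : Fin m, w k • (Pi.single (emb k) (1 : ℂ) : Fin n → ℂ)
  map_add' v w := by simp [add_smul, Finset.sum_add_distrib]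
  map_smul' r w := by simp [Finset.smul_sum, smul_smul]

lemma Ffun_apply {n m : ℕ} (emb : Fin m → Fin n) (w : Fin m → ℂ) (j : Fin n) :
    Ffun emb w j = ∑ k : Fin m, w k * (Pi.single (emb k) (1:ℂ) : Fin n → ℂ) j := by
  simp [Ffun, Finset.sum_apply]

lemma Ffun_apply_emb {n m : ℕ} {emb : Fin m → Fin n} (hinj : Function.Injective emb)
    (w : Fin m → ℂ) (k : Fin m) : Ffun emb w (emb k) = w k := by
  rw [Ffun_apply]
  rw [Finset.sum_eq_single k]
  · simp
  · intro j _ hj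
    rw [Pi.single_apply, if_neg (fun h => hj (hinj h.symm)), mul_zero]
  · simp

lemma Ffun_apply_notin {n m : ℕ} {emb : Fin m → Fin n} {j : Fin n}
    (hj : ∀ k, emb k ≠ j) (w : Fin m → ℂ) : Ffun emb w j = 0 := by
  rw [Ffun_apply]
  refine Finset.sum_eq_zero fun k _ => ?_
  rw [Pi.single_apply, if_neg (fun h => hj k h.symm), mul_zero]

lemma mulVec_Ffun {n m : ℕ} (M : Matrix (Fin n) (Fin n) ℂ) (emb : Fin m → Fin n)
    (w : Fin m → ℂ) (i : Fin n) :
    M.mulVec (Ffun emb w) i = ∑ k : Fin m, w k * M i (emb k) := by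
  have h : M.mulVec (Ffun emb w) = ∑ k : Fin m, w k • M.mulVec (Pi.single (emb k) 1) := by
    show M.mulVecLin (Ffun emb w) = _
    simp only [Ffun, LinearMap.coe_mk, AddHom.coe_mk, map_sum, map_smul,
      Matrix.mulVecLin_apply]
  rw [h]
  simp [Finset.sum_apply, mul_comm]

/-- For `n ≥ 2`, `Im γ ≠ 0` and `γ · conj γ = 1` (i.e. `|γ| = 1`), and a
connected interval `C = {a, …, b}` with `a ≤ b` that is not the whole chain
(`(a, b) ≠ (1, n)` in 1-indexing), the kernel `K(M, C)` of the off-diagonal block of the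
reduced metric has dimension `|C| - 1`. -/
theorem stmt_19 (n : ℕ) (hn : 2 ≤ n) (γ : ℂ) (hγ : γ.im ≠ 0)
    (hγ1 : γ * starRingEnd ℂ γ = 1) (a b : Fin n) (hab : a ≤ b)
    (hnot : ¬((a : ℕ) = 0 ∧ (b : ℕ) = n - 1)) :
    Module.finrank ℂ (Kspace (Mgamma n γ) (Set.Icc a b)) =
      ((b : ℕ) - (a : ℕ) + 1) - 1 := by
  classical
  set cγ : ℂ := starRingEnd ℂ γ with hcγdef
  have habn : (a : ℕ) ≤ (b : ℕ) := hab
  have hbn : (b : ℕ) < n := b.isLt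
  set m : ℕ := (b : ℕ) - (a : ℕ) + 1 with hm
  -- the embedding of Fin m into the interval
  have hembn : ∀ k : Fin m, (a : ℕ) + (k : ℕ) < n := fun k => by
    have := k.isLt; omega
  set emb : Fin m → Fin n := fun k => ⟨(a : ℕ) + (k : ℕ), hembn k⟩ with hembdef
  have hembval : ∀ k : Fin m, (emb k : ℕ) = (a : ℕ) + (k : ℕ) := fun k => rfl
  have hinj : Function.Injective emb := by
    intro k k' h
    have : (a : ℕ) + (k : ℕ) = (a : ℕ) + (k' : ℕ) := congrArg Fin.val h
    exact Fin.ext (by omega)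
  have hmem_emb : ∀ k : Fin m, emb k ∈ Set.Icc a b := by
    intro k
    have hk := k.isLt
    constructor
    · show (a : ℕ) ≤ (a : ℕ) + (k : ℕ); omega
    · show (a : ℕ) + (k : ℕ) ≤ (b : ℕ); omega
  have hnotin : ∀ j : Fin n, j ∉ Set.Icc a b → ∀ k : Fin m, emb k ≠ j := by
    intro j hj k h
    exact hj (h ▸ hmem_emb k)
  -- nonzero facts
  have hγ0 : γ ≠ 0 := fun h => by simp [h] at hγ
  have hcγ0 : cγ ≠ 0 := by
    intro h
    rw [hcγdef] at h
    exact hγ0 (by simpa using congrArg (starRingEnd ℂ) h)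
  have hIη : Complex.I * (γ.im : ℂ) ≠ 0 :=
    mul_ne_zero Complex.I_ne_zero (Complex.ofReal_ne_zero.mpr hγ)
  -- the power identity
  have hpow : ∀ k : Fin m, γ ^ ((b : ℕ) - (a : ℕ) - (k : ℕ))
      = γ ^ ((b : ℕ) - (a : ℕ)) * cγ ^ (k : ℕ) := by
    intro k
    have hk : (k : ℕ) ≤ (b : ℕ) - (a : ℕ) := by have := k.isLt; omega
    calc γ ^ ((b : ℕ) - (a : ℕ) - (k : ℕ))
        = γ ^ ((b : ℕ) - (a : ℕ) - (k : ℕ)) * (γ * cγ) ^ (k : ℕ) := by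
          rw [hγ1]; simp
      _ = (γ ^ ((b : ℕ) - (a : ℕ) - (k : ℕ)) * γ ^ (k : ℕ)) * cγ ^ (k : ℕ) := by
          rw [mul_pow]; ring
      _ = γ ^ ((b : ℕ) - (a : ℕ)) * cγ ^ (k : ℕ) := by
          rw [← pow_add]; congr 2; omega
  -- entries of M on the two off-diagonal blocks
  have hMlt : ∀ (i : Fin n), (i : ℕ) < (a : ℕ) → ∀ k : Fin m,
      Mgamma n γ i (emb k)
        = (-Complex.I * (γ.im : ℂ) * cγ ^ ((a : ℕ) - (i : ℕ) - 1)) * cγ ^ (k : ℕ) := by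
    intro i hi k
    have h1 : ¬((i : ℕ) = (emb k : ℕ)) := by rw [hembval]; omega
    have h2 : (i : ℕ) < (emb k : ℕ) := by rw [hembval]; omega
    have h3 : (emb k : ℕ) - (i : ℕ) - 1 = ((a : ℕ) - (i : ℕ) - 1) + (k : ℕ) := by
      rw [hembval]; omega
    simp only [Mgamma, Matrix.of_apply, if_neg h1, if_pos h2, h3, pow_add, ← hcγdef]
    ring
  have hMgt : ∀ (i : Fin n), (b : ℕ) < (i : ℕ) → ∀ k : Fin m,
      Mgamma n γ i (emb k)
        = (Complex.I * (γ.im : ℂ) * γ ^ ((i : ℕ) - (b : ℕ) - 1)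
            * γ ^ ((b : ℕ) - (a : ℕ))) * cγ ^ (k : ℕ) := by
    intro i hi k
    have hk := k.isLt
    have h1 : ¬((i : ℕ) = (emb k : ℕ)) := by rw [hembval]; omega
    have h2 : ¬((i : ℕ) < (emb k : ℕ)) := by rw [hembval]; omega
    have h3 : (i : ℕ) - (emb k : ℕ) - 1
        = ((i : ℕ) - (b : ℕ) - 1) + ((b : ℕ) - (a : ℕ) - (k : ℕ)) := by
      rw [hembval]; omega
    simp only [Mgamma, Matrix.of_apply, if_neg h1, if_neg h2, h3, pow_add, hpow k]
    ring
  -- key computation of mulVec on rows outside the interval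
  have key : ∀ (w : Fin m → ℂ) (i : Fin n), i ∉ Set.Icc a b →
      ∃ c : ℂ, c ≠ 0 ∧ (Mgamma n γ).mulVec (Ffun emb w) i = c * gfun m cγ w := by
    intro w i hi
    rw [Set.mem_Icc, not_and_or] at hi
    have hi' : (i : ℕ) < (a : ℕ) ∨ (b : ℕ) < (i : ℕ) := by
      rcases hi with h | h
      · left; exact lt_of_not_ge h
      · right; exact lt_of_not_ge h
    rcases hi' with h | h
    · refine ⟨-Complex.I * (γ.im : ℂ) * cγ ^ ((a : ℕ) - (i : ℕ) - 1), ?_, ?_⟩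
      · have : -Complex.I * (γ.im : ℂ) = -(Complex.I * (γ.im : ℂ)) := by ring
        rw [this]
        exact mul_ne_zero (neg_ne_zero.mpr hIη) (pow_ne_zero _ hcγ0)
      · rw [mulVec_Ffun]
        rw [show gfun m cγ w = ∑ k : Fin m, cγ ^ (k : ℕ) * w k from rfl, Finset.mul_sum]
        refine Finset.sum_congr rfl fun k _ => ?_
        rw [hMlt i h k]; ring
    · refine ⟨Complex.I * (γ.im : ℂ) * γ ^ ((i : ℕ) - (b : ℕ) - 1)
          * γ ^ ((b : ℕ) - (a : ℕ)), ?_, ?_⟩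
      · exact mul_ne_zero (mul_ne_zero hIη (pow_ne_zero _ hγ0)) (pow_ne_zero _ hγ0)
      · rw [mulVec_Ffun]
        rw [show gfun m cγ w = ∑ k : Fin m, cγ ^ (k : ℕ) * w k from rfl, Finset.mul_sum]
        refine Finset.sum_congr rfl fun k _ => ?_
        rw [hMgt i h k]; ring
  -- there is a row outside the interval
  obtain ⟨i₀, hi₀⟩ : ∃ i : Fin n, i ∉ Set.Icc a b := by
    rw [not_and_or] at hnot
    rcases hnot with h | h
    · refine ⟨⟨(a : ℕ) - 1, by omega⟩, ?_⟩
      rw [Set.mem_Icc]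
      rintro ⟨h1, -⟩
      have : (a : ℕ) ≤ (a : ℕ) - 1 := h1
      omega
    · refine ⟨⟨(b : ℕ) + 1, by omega⟩, ?_⟩
      rw [Set.mem_Icc]
      rintro ⟨-, h2⟩
      have : (b : ℕ) + 1 ≤ (b : ℕ) := h2
      omega
  -- membership characterisation
  have mem_iff : ∀ w : Fin m → ℂ,
      Ffun emb w ∈ Kspace (Mgamma n γ) (Set.Icc a b) ↔ gfun m cγ w = 0 := by
    intro w
    constructor
    · rintro ⟨-, h2⟩
      obtain ⟨c, hc, hcw⟩ := key w i₀ hi₀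
      have := h2 i₀ hi₀
      rw [hcw] at this
      exact (mul_eq_zero.mp this).resolve_left hc
    · intro hg
      refine ⟨fun j hj => Ffun_apply_notin (hnotin j hj) w, fun i hi => ?_⟩
      obtain ⟨c, -, hcw⟩ := key w i hi
      rw [hcw, hg, mul_zero]
  -- every element of Kspace is in the image of Ffun
  have hsurj : ∀ v ∈ Kspace (Mgamma n γ) (Set.Icc a b),
      Ffun emb (fun k => v (emb k)) = v := by
    rintro v ⟨h1, -⟩
    funext j
    by_cases hj : j ∈ Set.Icc a b
    · rw [Set.mem_Icc] at hj
      have hj1 : (a : ℕ) ≤ (j : ℕ) := hj.1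
      have hj2 : (j : ℕ) ≤ (b : ℕ) := hj.2
      have hk : (j : ℕ) - (a : ℕ) < m := by omega
      have hje : j = emb ⟨(j : ℕ) - (a : ℕ), hk⟩ := by
        apply Fin.ext; rw [hembval]; simp; omega
      rw [hje, Ffun_apply_emb hinj]
    · rw [Ffun_apply_notin (hnotin j hj), h1 j hj]
  -- build the equivalence with the kernel of gfun
  set g := gfun m cγ with hgdef
  have hΦmem : ∀ w : LinearMap.ker g,
      Ffun emb (w : Fin m → ℂ) ∈ Kspace (Mgamma n γ) (Set.Icc a b) := by
    intro w
    exact (mem_iff _).mpr (LinearMap.mem_ker.mp w.2)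
  let Φ : LinearMap.ker g →ₗ[ℂ] Kspace (Mgamma n γ) (Set.Icc a b) :=
    LinearMap.codRestrict _ ((Ffun emb).comp (LinearMap.ker g).subtype) hΦmem
  have hΦbij : Function.Bijective Φ := by
    constructor
    · intro x y hxy
      have h1 : Ffun emb (x : Fin m → ℂ) = Ffun emb (y : Fin m → ℂ) :=
        congrArg Subtype.val hxy
      apply Subtype.ext
      funext k
      have := congrFun h1 (emb k)
      rwa [Ffun_apply_emb hinj, Ffun_apply_emb hinj] at this
    · rintro ⟨v, hv⟩
      refine ⟨⟨fun k => v (emb k), ?_⟩, ?_⟩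
      · rw [LinearMap.mem_ker, hgdef, ← mem_iff, hsurj v hv]
        exact hv
      · exact Subtype.ext (hsurj v hv)
  have hrank : Module.finrank ℂ (Kspace (Mgamma n γ) (Set.Icc a b))
      = Module.finrank ℂ (LinearMap.ker g) :=
    (LinearEquiv.ofBijective Φ hΦbij).finrank_eq.symm
  -- g is surjective
  have hgs : Function.Surjective g := by
    intro x
    have h0 : 0 < m := by omega
    refine ⟨(Pi.single (⟨0, h0⟩ : Fin m) x : Fin m → ℂ), ?_⟩
    show (∑ k : Fin m, cγ ^ (k : ℕ) * (Pi.single (⟨0, h0⟩ : Fin m) x : Fin m → ℂ) k) = x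
    rw [Finset.sum_eq_single (⟨0, h0⟩ : Fin m)]
    · simp
    · intro j _ hj
      rw [Pi.single_apply, if_neg hj, mul_zero]
    · simp
  have h1 : Module.finrank ℂ (LinearMap.range g) + Module.finrank ℂ (LinearMap.ker g)
      = Module.finrank ℂ (Fin m → ℂ) := g.finrank_range_add_finrank_ker
  rw [LinearMap.range_eq_top.mpr hgs, finrank_top] at h1
  have h2 : Module.finrank ℂ ℂ = 1 := Module.finrank_self ℂ
  have h3 : Module.finrank ℂ (Fin m → ℂ) = m := by
    rw [Module.finrank_pi]; simp
  rw [hrank]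
  omega
end
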